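/- arXiv:0807.3655 — 9 statements merged into one kernel-verified Lean document; each statement's English description precedes it below -/
import Mathlib

section
/- Let E, F be complex normed spaces and β : E^k → F a continuous symmetric k-linear map. If p(v) := β(v,…,v) denotes the associated homogeneous polynomial, then ‖β‖_op ≤ ((2k)^k / k!)·‖p‖, where ‖p‖ := sup_{‖v‖≤1} ‖p(v)‖. In particular ‖β‖_op ≤ (2e)^k ‖p‖. -/
open Finset

noncomputable def sgn : Bool → ℂ := fun b => if b then 1 else -1

lemma sgn_norm (b : Bool) : ‖sgn b‖ = 1 := by cases b <;> simp [sgn]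

lemma coeff_eq {k : ℕ} (r : Fin k → Fin k) :
    (∑ ε : Fin k → Bool, (∏ i, sgn (ε i)) * ∏ j, sgn (ε (r j)))
      = if Function.Bijective r then (2 : ℂ) ^ k else 0 := by
  classical
  set m : Fin k → ℕ := fun i => (univ.filter fun j => r j = i).card with hm
  have step1 : ∀ ε : Fin k → Bool,
      (∏ i, sgn (ε i)) * ∏ j, sgn (ε (r j)) = ∏ i, sgn (ε i) ^ (m i + 1) := by
    intro ε
    have h2 : ∏ j, sgn (ε (r j)) = ∏ i, sgn (ε i) ^ (m i) := by
      rw [← Finset.prod_fiberwise_of_maps_to (g := r) (t := univ)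
        (fun j _ => mem_univ (r j)) (fun j => sgn (ε (r j)))]
      refine Finset.prod_congr rfl fun i _ => ?_
      calc ∏ j ∈ univ.filter fun j => r j = i, sgn (ε (r j))
          = ∏ _j ∈ univ.filter fun j => r j = i, sgn (ε i) := by
            refine Finset.prod_congr rfl fun j hj => ?_
            simp only [mem_filter] at hj
            rw [hj.2]
        _ = sgn (ε i) ^ m i := by rw [Finset.prod_const, hm]
    rw [h2, ← Finset.prod_mul_distrib]
    exact Finset.prod_congr rfl fun i _ => by ring
  simp_rw [step1]
  have step2 : (∑ ε : Fin k → Bool, ∏ i, sgn (ε i) ^ (m i + 1))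
      = ∏ i, ∑ b : Bool, sgn b ^ (m i + 1) := by
    rw [Finset.prod_univ_sum, Fintype.piFinset_univ]
  rw [step2]
  have key : ∀ n : ℕ, (∑ b : Bool, sgn b ^ (n + 1)) = if Even n then 0 else 2 := by
    intro n
    rw [Fintype.sum_bool]
    by_cases h : Even n
    · have : Odd (n + 1) := Even.add_one h
      simp [sgn, this.neg_one_pow, h]
    · have : Even (n + 1) := Odd.add_one (Nat.not_even_iff_odd.mp h)
      simp [sgn, this.neg_one_pow, h]
      norm_num
  simp_rw [key]
  have hsum : ∑ i, m i = k := by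
    have := Finset.card_eq_sum_card_fiberwise (f := r) (s := univ) (t := univ)
      (fun j _ => mem_univ (r j))
    simpa [hm] using this.symm
  by_cases hbij : Function.Bijective r
  · have hone : ∀ i, m i = 1 := by
      intro i
      obtain ⟨j, hj⟩ := hbij.2 i
      have : (univ.filter fun a => r a = i) = {j} := by
        ext a
        simp only [mem_filter, mem_univ, true_and, Finset.mem_singleton]
        constructor
        · intro h; exact hbij.1 (h.trans hj.symm)
        · rintro rfl; exact hj
      simp [hm, this]
    rw [if_pos hbij]
    simp only [hone]
    rw [Finset.prod_const]
    norm_num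
  · have hnsurj : ¬ Function.Surjective r := fun h =>
      hbij ((Finite.surjective_iff_bijective).mp h)
    simp only [Function.Surjective, not_forall, not_exists] at hnsurj
    obtain ⟨i, hi⟩ := hnsurj
    have hmi : m i = 0 := by
      rw [hm]
      simp only [Finset.card_eq_zero]
      refine Finset.filter_eq_empty_iff.mpr fun j _ => hi j
    rw [if_neg hbij]
    refine Finset.prod_eq_zero (mem_univ i) ?_
    rw [hmi]
    simp

lemma polar_aux {E F : Type*} [NormedAddCommGroup E] [NormedSpace ℂ E]
    [NormedAddCommGroup F] [NormedSpace ℂ F] {k : ℕ}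
    (β : ContinuousMultilinearMap ℂ (fun _ : Fin k => E) F)
    (hsymm : ∀ (v : Fin k → E) (σ : Equiv.Perm (Fin k)), β (v ∘ σ) = β v)
    (v : Fin k → E) :
    ∑ ε : Fin k → Bool, (∏ i, sgn (ε i)) • β (fun _ => ∑ i, sgn (ε i) • v i)
      = ((2 ^ k * Nat.factorial k : ℕ) : ℂ) • β v := by
  classical
  have expand : ∀ ε : Fin k → Bool,
      β (fun _ => ∑ i, sgn (ε i) • v i)
        = ∑ r : Fin k → Fin k, (∏ j, sgn (ε (r j))) • β (v ∘ r) := by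
    intro ε
    rw [β.map_sum (g := fun _ i => sgn (ε i) • v i)]
    exact Finset.sum_congr rfl fun r _ => β.map_smul_univ _ _
  calc ∑ ε : Fin k → Bool, (∏ i, sgn (ε i)) • β (fun _ => ∑ i, sgn (ε i) • v i)
      = ∑ ε : Fin k → Bool, ∑ r : Fin k → Fin k,
          ((∏ i, sgn (ε i)) * ∏ j, sgn (ε (r j))) • β (v ∘ r) := by
        simp_rw [expand, Finset.smul_sum, smul_smul]
    _ = ∑ r : Fin k → Fin k,
          (∑ ε : Fin k → Bool, (∏ i, sgn (ε i)) * ∏ j, sgn (ε (r j))) • β (v ∘ r) := by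
        rw [Finset.sum_comm]
        simp_rw [Finset.sum_smul]
    _ = ∑ r : Fin k → Fin k,
          (if Function.Bijective r then (2 : ℂ) ^ k else 0) • β (v ∘ r) := by
        simp_rw [coeff_eq]
    _ = ∑ r ∈ univ.filter fun r : Fin k → Fin k => Function.Bijective r,
          ((2 : ℂ) ^ k) • β v := by
        rw [Finset.sum_filter]
        refine Finset.sum_congr rfl fun r _ => ?_
        by_cases h : Function.Bijective r
        · rw [if_pos h, if_pos h]
          congr 1
          exact hsymm v (Equiv.ofBijective r h)
        · rw [if_neg h, if_neg h, zero_smul]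
    _ = ((2 ^ k * Nat.factorial k : ℕ) : ℂ) • β v := by
        rw [Finset.sum_const]
        have hcard : (univ.filter fun r : Fin k → Fin k => Function.Bijective r).card
            = Nat.factorial k := by
          have h1 : Nat.factorial k = Fintype.card (Equiv.Perm (Fin k)) := by
            simp [Fintype.card_perm]
          rw [h1, ← Finset.card_univ]
          refine (Finset.card_bij (fun (σ : Equiv.Perm (Fin k)) _ => ⇑σ) ?_ ?_ ?_).symm
          · intro σ _; simp only [mem_filter, mem_univ, true_and]; exact σ.bijective
          · intro σ₁ _ σ₂ _ h; exact Equiv.coe_fn_injective h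
          · intro r hr
            simp only [mem_filter] at hr
            exact ⟨Equiv.ofBijective r hr.2, mem_univ _, rfl⟩
        rw [hcard, ← Nat.cast_smul_eq_nsmul ℂ, smul_smul]
        congr 1
        push_cast
        ring

lemma pow_le_exp_mul_factorial : ∀ k : ℕ, (k : ℝ) ^ k ≤ Real.exp 1 ^ k * (Nat.factorial k : ℝ) := by
  intro k
  induction k with
  | zero => simp
  | succ k ih =>
    have hstep : ((k : ℝ) + 1) ^ k ≤ Real.exp 1 * (k : ℝ) ^ k := by
      rcases Nat.eq_zero_or_pos k with rfl | hk
      · simpa using Real.one_le_exp (by norm_num)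
      · have hk0 : (0:ℝ) < k := by exact_mod_cast hk
        have h1 : (k : ℝ) + 1 = (k : ℝ) * (1 + 1 / k) := by field_simp
        have h2 : (1 + 1 / (k:ℝ)) ^ k ≤ Real.exp 1 := by
          have := Real.add_one_le_exp (1 / (k:ℝ))
          calc (1 + 1 / (k:ℝ)) ^ k ≤ Real.exp (1 / k) ^ k := by
                apply pow_le_pow_left₀ (by positivity)
                linarith
            _ = Real.exp ((k : ℝ) * (1 / k)) := by rw [← Real.exp_nat_mul]
            _ = Real.exp 1 := by rw [mul_one_div, div_self hk0.ne']
        calc ((k : ℝ) + 1) ^ k = (k : ℝ) ^ k * (1 + 1 / k) ^ k := by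
              rw [h1, mul_pow]
          _ ≤ (k : ℝ) ^ k * Real.exp 1 := by
              apply mul_le_mul_of_nonneg_left h2 (by positivity)
          _ = Real.exp 1 * (k : ℝ) ^ k := by ring
    have hkk : (0:ℝ) ≤ (k:ℝ) + 1 := by positivity
    calc ((k + 1 : ℕ) : ℝ) ^ (k + 1) = ((k:ℝ) + 1) ^ k * ((k:ℝ) + 1) := by
          push_cast; ring
      _ ≤ (Real.exp 1 * (k : ℝ) ^ k) * ((k:ℝ) + 1) := by
          apply mul_le_mul_of_nonneg_right hstep hkk
      _ ≤ (Real.exp 1 * (Real.exp 1 ^ k * (Nat.factorial k : ℝ))) * ((k:ℝ) + 1) := by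
          apply mul_le_mul_of_nonneg_right _ hkk
          exact mul_le_mul_of_nonneg_left ih (Real.exp_pos 1).le
      _ = Real.exp 1 ^ (k + 1) * ((Nat.factorial (k + 1) : ℝ)) := by
          rw [Nat.factorial_succ]
          push_cast
          ring

/-- Polarization estimate: for a continuous symmetric `k`-linear map `β` with associated
homogeneous polynomial `p v = β (v, …, v)` bounded by `C` on the unit ball, one has
`‖β‖ ≤ ((2k)^k / k!) * C`, and in particular `‖β‖ ≤ (2e)^k * C`. -/
theorem stmt3 {E F : Type*} [NormedAddCommGroup E] [NormedSpace ℂ E]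
    [NormedAddCommGroup F] [NormedSpace ℂ F] {k : ℕ}
    (β : ContinuousMultilinearMap ℂ (fun _ : Fin k => E) F)
    (hsymm : ∀ (v : Fin k → E) (σ : Equiv.Perm (Fin k)), β (v ∘ σ) = β v)
    (C : ℝ) (hC : ∀ v : E, ‖v‖ ≤ 1 → ‖β (fun _ => v)‖ ≤ C) :
    ‖β‖ ≤ ((2 * k : ℕ) : ℝ) ^ k / ((Nat.factorial k : ℕ) : ℝ) * C ∧
      ‖β‖ ≤ (2 * Real.exp 1) ^ k * C := by
  classical
  have hC0 : 0 ≤ C := le_trans (norm_nonneg _) (hC 0 (by simp))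
  have hfacpos : (0:ℝ) < (Nat.factorial k : ℝ) := by
    exact_mod_cast Nat.factorial_pos k
  -- homogeneous bound
  have hp : ∀ w : E, ‖β (fun _ => w)‖ ≤ C * ‖w‖ ^ k := by
    intro w
    rcases eq_or_ne w 0 with rfl | hw
    · rcases Nat.eq_zero_or_pos k with hk | hk
      · subst hk
        simpa using hC 0 (by simp)
      · have h0 : β (fun _ => (0:E)) = 0 := β.map_coord_zero ⟨0, hk⟩ rfl
        rw [h0]
        simp [zero_pow hk.ne']
    · have hw' : ‖w‖ ≠ 0 := norm_ne_zero_iff.mpr hw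
      set u : E := ((‖w‖ : ℂ))⁻¹ • w with hu
      have hun : ‖u‖ = 1 := by
        rw [hu, norm_smul]
        simp [hw', abs_of_nonneg (norm_nonneg w)]
      have hmu : (fun _ : Fin k => w) = fun _ => ((‖w‖ : ℂ)) • u := by
        funext _
        rw [hu, smul_inv_smul₀]
        exact_mod_cast hw'
      rw [hmu, β.map_smul_univ]
      rw [norm_smul, norm_prod]
      have : ∏ _i : Fin k, ‖((‖w‖ : ℂ))‖ = ‖w‖ ^ k := by
        simp [abs_of_nonneg (norm_nonneg w)]
      rw [this]
      calc ‖w‖ ^ k * ‖β (fun _ => u)‖ ≤ ‖w‖ ^ k * C := by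
            apply mul_le_mul_of_nonneg_left (hC u hun.le) (by positivity)
        _ = C * ‖w‖ ^ k := by ring
  -- bound on unit vectors
  have key : ∀ v : Fin k → E, (∀ i, ‖v i‖ ≤ 1) →
      ‖β v‖ ≤ (k : ℝ) ^ k / (Nat.factorial k : ℝ) * C := by
    intro v hv
    have hpol := polar_aux β hsymm v
    have hnorm : ((2 ^ k * Nat.factorial k : ℕ) : ℝ) * ‖β v‖
        ≤ 2 ^ k * ((k : ℝ) ^ k * C) := by
      have h1 : ((2 ^ k * Nat.factorial k : ℕ) : ℝ) * ‖β v‖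
          = ‖((2 ^ k * Nat.factorial k : ℕ) : ℂ) • β v‖ := by
        rw [norm_smul]
        simp
      rw [h1, ← hpol]
      calc ‖∑ ε : Fin k → Bool, (∏ i, sgn (ε i)) • β (fun _ => ∑ i, sgn (ε i) • v i)‖
          ≤ ∑ ε : Fin k → Bool, ‖(∏ i, sgn (ε i)) • β (fun _ => ∑ i, sgn (ε i) • v i)‖ :=
            norm_sum_le _ _
        _ ≤ ∑ _ε : Fin k → Bool, (k : ℝ) ^ k * C := by
            refine Finset.sum_le_sum fun ε _ => ?_
            rw [norm_smul, norm_prod]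
            simp only [sgn_norm, Finset.prod_const_one, one_mul]
            have hwε : ‖∑ i, sgn (ε i) • v i‖ ≤ (k : ℝ) := by
              calc ‖∑ i, sgn (ε i) • v i‖ ≤ ∑ i, ‖sgn (ε i) • v i‖ := norm_sum_le _ _
                _ = ∑ i, ‖v i‖ := by
                    refine Finset.sum_congr rfl fun i _ => ?_
                    rw [norm_smul, sgn_norm, one_mul]
                _ ≤ ∑ _i : Fin k, (1:ℝ) := Finset.sum_le_sum fun i _ => hv i
                _ = (k : ℝ) := by simp
            calc ‖β (fun _ => ∑ i, sgn (ε i) • v i)‖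
                ≤ C * ‖∑ i, sgn (ε i) • v i‖ ^ k := hp _
              _ ≤ C * (k : ℝ) ^ k := by
                  apply mul_le_mul_of_nonneg_left _ hC0
                  exact pow_le_pow_left₀ (norm_nonneg _) hwε k
              _ = (k : ℝ) ^ k * C := by ring
        _ = 2 ^ k * ((k : ℝ) ^ k * C) := by
            rw [Finset.sum_const]
            simp [Finset.card_univ, mul_comm]
    have h2pos : (0:ℝ) < 2 ^ k := by positivity
    rw [div_mul_eq_mul_div, le_div_iff₀ hfacpos]
    push_cast at hnorm
    nlinarith [norm_nonneg (β v)]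
  -- operator norm bound
  have hM : ‖β‖ ≤ (k : ℝ) ^ k / (Nat.factorial k : ℝ) * C := by
    apply ContinuousMultilinearMap.opNorm_le_bound (by positivity)
    intro m
    by_cases hm : ∀ i, m i ≠ 0
    · set u : Fin k → E := fun i => ((‖m i‖ : ℂ))⁻¹ • m i with hu
      have hun : ∀ i, ‖u i‖ = 1 := by
        intro i
        rw [hu, norm_smul]
        simp [norm_ne_zero_iff.mpr (hm i), abs_of_nonneg (norm_nonneg (m i))]
      have hmu : m = fun i => ((‖m i‖ : ℂ)) • u i := by
        funext i
        rw [hu, smul_inv_smul₀]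
        exact_mod_cast norm_ne_zero_iff.mpr (hm i)
      calc ‖β m‖ = ‖(∏ i, ((‖m i‖ : ℂ))) • β u‖ := by rw [← β.map_smul_univ, ← hmu]
        _ = (∏ i, ‖m i‖) * ‖β u‖ := by
            rw [norm_smul, norm_prod]
            congr 1
            exact Finset.prod_congr rfl fun i _ => by
              simp [abs_of_nonneg (norm_nonneg (m i))]
        _ ≤ (∏ i, ‖m i‖) * ((k : ℝ) ^ k / (Nat.factorial k : ℝ) * C) := by
            apply mul_le_mul_of_nonneg_left (key u fun i => (hun i).le)
            exact Finset.prod_nonneg fun i _ => norm_nonneg _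
        _ = (k : ℝ) ^ k / (Nat.factorial k : ℝ) * C * ∏ i, ‖m i‖ := by ring
    · push_neg at hm
      obtain ⟨i, hi⟩ := hm
      rw [β.map_coord_zero i hi, norm_zero]
      have : ∏ j, ‖m j‖ = 0 := Finset.prod_eq_zero (Finset.mem_univ i) (by simp [hi])
      rw [this, mul_zero]
  constructor
  · refine hM.trans ?_
    push_cast
    gcongr
    linarith [Nat.cast_nonneg (α := ℝ) k]
  · refine hM.trans ?_
    apply mul_le_mul_of_nonneg_right _ hC0
    rw [div_le_iff₀ hfacpos]
    calc (k:ℝ)^k ≤ Real.exp 1 ^ k * (Nat.factorial k : ℝ) := pow_le_exp_mul_factorial k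
      _ ≤ (2 * Real.exp 1)^k * (Nat.factorial k : ℝ) := by
          apply mul_le_mul_of_nonneg_right _ hfacpos.le
          rw [mul_pow]
          have h1 : (1:ℝ) ≤ 2^k := one_le_pow₀ (by norm_num)
          nlinarith [pow_pos (Real.exp_pos 1) k]
end

section
/- Let X be a complex Banach space, K ⊆ X nonempty compact, U_n := K + B_{1/n}(0). If γ : U_n → X is continuously differentiable with γ|_K = 0 and ‖γ'(x)‖_op < 1 for all x ∈ U_n (where the sup over x is strictly less than 1), then η := id + γ restricted to U_{6n} := K + B_{1/(6n)}(0) is injective, its derivative η'(x) is invertible at every point, and its image η(U_{6n}) is open; hence η|_{U_{6n}} is an analytic diffeomorphism onto its open image. -/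
open Metric Pointwise

/-- Lemma 3.6: if `γ` is continuously differentiable on `U_n = K + B_{1/n}(0)`, vanishes
on `K`, and `‖γ'(x)‖ ≤ S < 1` on `U_n`, then `η := id + γ` is injective on
`U_{6n} = K + B_{1/(6n)}(0)`, its derivative `id + γ'(x)` is invertible at every point of
`U_{6n}`, and the image `η(U_{6n})` is open; hence `η` is an analytic diffeomorphism of
`U_{6n}` onto its open image. -/
theorem stmt6 {X : Type*} [NormedAddCommGroup X] [NormedSpace ℂ X] [CompleteSpace X]
    (K : Set X) (hKc : IsCompact K) (hKne : K.Nonempty) (n : ℕ) (hn : 0 < n)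
    (γ : X → X) (γ' : X → X →L[ℂ] X) (S : ℝ) (hS1 : S < 1)
    (hdiff : ∀ x ∈ K + ball (0 : X) (1 / (n : ℝ)), HasFDerivAt γ (γ' x) x)
    (hcont : ContinuousOn γ' (K + ball (0 : X) (1 / (n : ℝ))))
    (hbound : ∀ x ∈ K + ball (0 : X) (1 / (n : ℝ)), ‖γ' x‖ ≤ S)
    (h0 : ∀ a ∈ K, γ a = 0) :
    Set.InjOn (fun x => x + γ x) (K + ball (0 : X) (1 / (6 * (n : ℝ)))) ∧
      (∀ x ∈ K + ball (0 : X) (1 / (6 * (n : ℝ))),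
        ∃ e : X ≃L[ℂ] X, (e : X →L[ℂ] X) = ContinuousLinearMap.id ℂ X + γ' x) ∧
      IsOpen ((fun x => x + γ x) '' (K + ball (0 : X) (1 / (6 * (n : ℝ))))) := by
  have hnpos : (0 : ℝ) < 1 / (n : ℝ) := by positivity
  have h6pos : (0 : ℝ) < 1 / (6 * (n : ℝ)) := by positivity
  set U : Set X := K + ball (0 : X) (1 / (n : ℝ)) with hU
  set V : Set X := K + ball (0 : X) (1 / (6 * (n : ℝ))) with hV
  -- S ≥ 0
  obtain ⟨a₀, ha₀⟩ := hKne
  have ha₀U : a₀ ∈ U := by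
    refine ⟨a₀, ha₀, 0, by simpa using hnpos, by simp⟩
  have hn1 : (1:ℝ) ≤ n := by exact_mod_cast hn
  have hS0 : 0 ≤ S := le_trans (norm_nonneg _) (hbound a₀ ha₀U)
  -- balls of radius 1/n around points of K are in U
  have hballU : ∀ a ∈ K, ball a (1 / (n : ℝ)) ⊆ U := by
    intro a ha z hz
    exact ⟨a, ha, z - a, by simpa [mem_ball, dist_eq_norm] using hz, by simp⟩
  -- mean value estimate on such balls
  have hmvt : ∀ a ∈ K, ∀ x ∈ ball a (1 / (n : ℝ)), ∀ y ∈ ball a (1 / (n : ℝ)),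
      ‖γ x - γ y‖ ≤ S * ‖x - y‖ := by
    intro a ha x hx y hy
    exact (convex_ball a _).norm_image_sub_le_of_norm_hasFDerivWithin_le
      (fun z hz => (hdiff z (hballU a ha hz)).hasFDerivWithinAt)
      (fun z hz => hbound z (hballU a ha hz)) hy hx
  -- members of V are near K
  have hmemV : ∀ x ∈ V, ∃ a ∈ K, ‖x - a‖ < 1 / (6 * (n : ℝ)) := by
    rintro x ⟨a, ha, b, hb, rfl⟩
    exact ⟨a, ha, by simpa [mem_ball, dist_eq_norm] using hb⟩
  have h6n : 1 / (6 * (n : ℝ)) < 1 / (n : ℝ) := by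
    apply one_div_lt_one_div_of_lt (by positivity)
    nlinarith [hn1]
  -- γ is small on V
  have hsmall : ∀ x ∈ V, ‖γ x‖ < 1 / (6 * (n : ℝ)) := by
    intro x hx
    obtain ⟨a, ha, hxa⟩ := hmemV x hx
    have hxb : x ∈ ball a (1 / (n : ℝ)) := by
      rw [mem_ball, dist_eq_norm]; linarith
    have hab : a ∈ ball a (1 / (n : ℝ)) := mem_ball_self hnpos
    have := hmvt a ha x hxb a hab
    rw [h0 a ha, sub_zero] at this
    calc ‖γ x‖ ≤ S * ‖x - a‖ := this
      _ ≤ 1 * ‖x - a‖ := by nlinarith [norm_nonneg (x - a)]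
      _ < 1 / (6 * (n : ℝ)) := by simpa using hxa
  have hVU : V ⊆ U := by
    rintro x ⟨a, ha, b, hb, rfl⟩
    exact ⟨a, ha, b, ball_subset_ball h6n.le hb, rfl⟩
  -- injectivity
  have hinj : Set.InjOn (fun x => x + γ x) V := by
    intro x hx y hy hxy
    simp only at hxy
    obtain ⟨a, ha, hxa⟩ := hmemV x hx
    have hsub : x - y = γ y - γ x := by
      have h : x + γ x - (y + γ y) = 0 := by rw [hxy]; abel
      have h2 : x - y - (γ y - γ x) = x + γ x - (y + γ y) := by abel
      rw [← sub_eq_zero, h2, h]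
    have hxy3 : ‖x - y‖ < 1 / (3 * (n : ℝ)) := by
      have := norm_sub_le (γ y) (γ x)
      have h1 := hsmall x hx
      have h2 := hsmall y hy
      rw [hsub]
      have : ‖γ y - γ x‖ ≤ ‖γ y‖ + ‖γ x‖ := norm_sub_le _ _
      have h3 : (1 : ℝ) / (6 * n) + 1 / (6 * n) = 1 / (3 * n) := by
        field_simp; ring
      linarith
    have hxball : x ∈ ball a (1 / (n : ℝ)) := by
      rw [mem_ball, dist_eq_norm]; linarith
    have hyball : y ∈ ball a (1 / (n : ℝ)) := by
      rw [mem_ball, dist_eq_norm]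
      have : ‖y - a‖ ≤ ‖y - x‖ + ‖x - a‖ := norm_sub_le_norm_sub_add_norm_sub y x a
      have hyx : ‖y - x‖ = ‖x - y‖ := by rw [norm_sub_rev]
      have h36 : (1 : ℝ) / (3 * n) + 1 / (6 * n) ≤ 1 / n := by
        rw [div_add_div _ _ (by positivity) (by positivity), div_le_div_iff₀ (by positivity) (by positivity)]
        ring_nf; nlinarith [hn1, sq_nonneg (n:ℝ)]
      linarith
    have hkey : ‖x - y‖ ≤ S * ‖x - y‖ := by
      calc ‖x - y‖ = ‖γ y - γ x‖ := by rw [hsub]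
        _ ≤ S * ‖y - x‖ := hmvt a ha y hyball x hxball
        _ = S * ‖x - y‖ := by rw [norm_sub_rev]
    have : (1 - S) * ‖x - y‖ ≤ 0 := by linarith
    have hxy0 : ‖x - y‖ ≤ 0 := by nlinarith [norm_nonneg (x - y)]
    have := le_antisymm hxy0 (norm_nonneg _)
    rwa [norm_eq_zero, sub_eq_zero] at this
  -- invertibility of derivatives
  have hinv : ∀ x ∈ V, ∃ e : X ≃L[ℂ] X,
      (e : X →L[ℂ] X) = ContinuousLinearMap.id ℂ X + γ' x := by
    intro x hx
    have hlt : ‖-(γ' x)‖ < 1 := by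
      rw [norm_neg]; exact lt_of_le_of_lt (hbound x (hVU hx)) hS1
    refine ⟨ContinuousLinearEquiv.unitsEquiv ℂ X (Units.oneSub (-(γ' x)) hlt), ?_⟩
    ext v
    simp [ContinuousLinearEquiv.unitsEquiv_apply, Units.val_oneSub,
      ContinuousLinearMap.one_def, sub_neg_eq_add]
  refine ⟨hinj, hinv, ?_⟩
  -- openness of the image
  have hUopen : IsOpen U := hU ▸ isOpen_ball.add_left
  have hVopen : IsOpen V := hV ▸ isOpen_ball.add_left
  rw [isOpen_iff_mem_nhds]
  rintro z ⟨x, hx, rfl⟩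
  obtain ⟨e, he⟩ := hinv x hx
  have hUnhds : U ∈ nhds x := hUopen.mem_nhds (hVU hx)
  have hstrictγ : HasStrictFDerivAt γ (γ' x) x :=
    hasStrictFDerivAt_of_hasFDerivAt_of_continuousAt
      (Filter.eventually_of_mem hUnhds fun y hy => hdiff y hy)
      (hcont.continuousAt hUnhds)
  have hstrict : HasStrictFDerivAt (fun x => x + γ x) (e : X →L[ℂ] X) x := by
    rw [he]
    exact (hasStrictFDerivAt_id x).add hstrictγ
  have hmap := hstrict.map_nhds_eq_of_equiv
  rw [← hmap]
  exact Filter.image_mem_map (hVopen.mem_nhds hx)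
end

section
/- Let X be a Banach space, T : X → X a linear homeomorphism, U ⊆ X an open 0-neighborhood, and f : U → X an L-Lipschitz map with f(0) = 0 and λ := L·‖T⁻¹‖_op < 1. Then T + f is a homeomorphism from U onto an open subset V of X, its inverse is Lipschitz with constant ‖T⁻¹‖_op/(1−λ), and if B_r(0) ⊆ U then B_{r(1−λ)/‖T⁻¹‖_op}(0) ⊆ V. -/
open Metric

/-- Wells' quantitative Lipschitz inverse function theorem: if `T` is a linear
homeomorphism of a Banach space `X`, `f : U → X` is `L`-Lipschitz on an open
`0`-neighborhood `U` with `f 0 = 0` and `λ := L·‖T⁻¹‖ < 1`, then `T + f` is a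
homeomorphism of `U` onto an open set `V`, the inverse is Lipschitz with constant
`‖T⁻¹‖/(1-λ)`, and if `B_r(0) ⊆ U` then `B_{r(1-λ)/‖T⁻¹‖}(0) ⊆ V`. -/
theorem stmt7 {X : Type*} [NormedAddCommGroup X] [NormedSpace ℝ X] [CompleteSpace X]
    (T : X ≃L[ℝ] X) (U : Set X) (hU : IsOpen U) (h0U : (0 : X) ∈ U)
    (f : X → X) (L : NNReal) (hL : 0 < (L : ℝ))
    (hf : LipschitzOnWith L f U) (hf0 : f 0 = 0)
    (hlam : (L : ℝ) * ‖(T.symm : X →L[ℝ] X)‖ < 1) :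
    ∃ (V : Set X) (g : X → X), IsOpen V ∧
      Set.BijOn (fun x => T x + f x) U V ∧
      (∀ x ∈ U, g (T x + f x) = x) ∧
      (∀ y ∈ V, g y ∈ U ∧ T (g y) + f (g y) = y) ∧
      LipschitzOnWith
        (Real.toNNReal (‖(T.symm : X →L[ℝ] X)‖ / (1 - (L : ℝ) * ‖(T.symm : X →L[ℝ] X)‖)))
        g V ∧
      ∀ r : ℝ, 0 < r → ball (0 : X) r ⊆ U →
        ball (0 : X) (r * (1 - (L : ℝ) * ‖(T.symm : X →L[ℝ] X)‖) / ‖(T.symm : X →L[ℝ] X)‖)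
          ⊆ V := by
  rcases subsingleton_or_nontrivial X with hsub | hnt
  · -- trivial case: everything is `0`
    refine ⟨U, id, hU, ?_, ?_, ?_, ?_, ?_⟩
    · refine ⟨fun x hx => ?_, fun x _ y _ _ => Subsingleton.elim x y, fun y hy => ?_⟩
      · simpa [Subsingleton.elim ((T x + f x : X)) (0 : X)] using h0U
      · exact ⟨0, h0U, Subsingleton.elim _ _⟩
    · intro x _; exact Subsingleton.elim _ _
    · intro y hy; exact ⟨hy, Subsingleton.elim _ _⟩
    · intro x _ y _; simp [Subsingleton.elim x y]
    · intro r _ _ y hy; simpa [Subsingleton.elim y (0 : X)] using h0U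
  -- notation
  set nT : ℝ := ‖(T.symm : X →L[ℝ] X)‖ with hnT
  have hNpos : 0 < nT := by
    have h : (T.symm : X →L[ℝ] X) ≠ 0 := by
      intro h
      obtain ⟨x, hx⟩ := exists_ne (0 : X)
      have : T.symm x = 0 := by
        have := congrFun (congrArg DFunLike.coe h) x
        simpa using this
      have : x = 0 := by
        have := congrArg T this
        simpa using this
      exact hx this
    simpa [hnT] using norm_pos_iff.mpr h
  set F : X → X := fun x => T x + f x with hF
  have hap : ApproximatesLinearOn F (T : X →L[ℝ] X) U L := by
    intro x hx y hy
    have h1 : F x - F y - (T : X →L[ℝ] X) (x - y) = f x - f y := by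
      simp [hF, map_sub]
      abel
    rw [h1, ← dist_eq_norm, ← dist_eq_norm]
    exact hf.dist_le_mul x hx y hy
  have hcR : (L : ℝ) < (‖(T.symm : X →L[ℝ] X)‖₊ : ℝ)⁻¹ := by
    show (L : ℝ) < ‖(T.symm : X →L[ℝ] X)‖⁻¹
    rw [← hnT, inv_eq_one_div, lt_div_iff₀ hNpos]
    exact hlam
  have hc : Subsingleton X ∨ L < ‖(T.symm : X →L[ℝ] X)‖₊⁻¹ := by
    right
    rw [← NNReal.coe_lt_coe, NNReal.coe_inv]
    exact hcR
  have hcR' : (L : ℝ) < nT⁻¹ := hcR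
  have hdenom : (0:ℝ) < 1 - (L : ℝ) * nT := by linarith
  set P := hap.toOpenPartialHomeomorph F U hc hU with hP
  refine ⟨F '' U, P.symm, ?_, ?_, ?_, ?_, ?_, ?_⟩
  · have := P.open_target
    simpa [hP] using this
  · exact (hap.injOn hc).bijOn_image
  · intro x hx
    exact P.left_inv (by simpa [hP] using hx)
  · intro y hy
    have hy' : y ∈ P.target := by simpa [hP] using hy
    exact ⟨P.map_target hy', P.right_inv hy'⟩
  · -- Lipschitz bound for the inverse
    have hanti := hap.antilipschitz hc
    set K : NNReal := (‖(T.symm : X →L[ℝ] X)‖₊⁻¹ - L)⁻¹ with hK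
    have hLip : LipschitzOnWith K P.symm (F '' U) := by
      intro y1 hy1 y2 hy2
      obtain ⟨x1, hx1, rfl⟩ := hy1
      obtain ⟨x2, hx2, rfl⟩ := hy2
      have h1 : P.symm (F x1) = x1 := P.left_inv (by simpa [hP] using hx1)
      have h2 : P.symm (F x2) = x2 := P.left_inv (by simpa [hP] using hx2)
      rw [h1, h2]
      exact hanti ⟨x1, hx1⟩ ⟨x2, hx2⟩
    have hsubcoe : ((‖(T.symm : X →L[ℝ] X)‖₊⁻¹ - L : NNReal) : ℝ) = nT⁻¹ - L := by
      rw [NNReal.coe_sub (le_of_lt (by rw [← NNReal.coe_lt_coe, NNReal.coe_inv]; exact hcR))]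
      simp [hnT]
    have hsubδ : nT⁻¹ - (L:ℝ) = (1 - (L : ℝ) * nT) / nT := by
      field_simp
    have hKcoe : (K : ℝ) = nT / (1 - (L : ℝ) * nT) := by
      rw [hK, NNReal.coe_inv, hsubcoe, hsubδ, inv_div]
    have hle : K ≤ Real.toNNReal (nT / (1 - (L : ℝ) * nT)) := by
      rw [← NNReal.coe_le_coe, hKcoe, Real.coe_toNNReal _ (by positivity)]
    intro y1 hy1 y2 hy2
    calc edist (P.symm y1) (P.symm y2) ≤ (K : ENNReal) * edist y1 y2 := hLip hy1 hy2
    _ ≤ _ := by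
      gcongr
  · -- ball inclusion
    intro r hr hball y hy
    rw [mem_ball_zero_iff] at hy
    set δ : ℝ := (1 - (L : ℝ) * nT) / nT with hδ
    have hδpos : 0 < δ := div_pos hdenom hNpos
    have hyδ : ‖y‖ < r * δ := by
      rw [hδ]
      calc ‖y‖ < r * (1 - (L : ℝ) * nT) / nT := hy
      _ = r * ((1 - (L : ℝ) * nT) / nT) := by ring
    set ε : ℝ := ‖y‖ / δ with hε
    have hε0 : 0 ≤ ε := div_nonneg (norm_nonneg _) hδpos.le
    have hεr : ε < r := by
      rw [hε, div_lt_iff₀ hδpos]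
      linarith [hyδ]
    have hcb : closedBall (0 : X) ε ⊆ U := by
      refine Set.Subset.trans ?_ hball
      intro z hz
      rw [mem_closedBall_zero_iff] at hz
      rw [mem_ball_zero_iff]
      linarith
    have hsubδ : nT⁻¹ - (L:ℝ) = δ := by
      rw [hδ]; field_simp
    have hsurj := hap.surjOn_closedBall_of_nonlinearRightInverse
      (ContinuousLinearEquiv.toNonlinearRightInverse T) hε0 hcb
    have hF0 : F 0 = 0 := by simp [hF, hf0]
    have hymem : y ∈ closedBall (F 0)
        ((((ContinuousLinearEquiv.toNonlinearRightInverse T).nnnorm : ℝ)⁻¹ - L) * ε) := by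
      rw [hF0, mem_closedBall_zero_iff]
      have hn : ((ContinuousLinearEquiv.toNonlinearRightInverse T).nnnorm : ℝ) = nT := by
        simp [ContinuousLinearEquiv.toNonlinearRightInverse, hnT]
      rw [hn, hsubδ, hε, mul_div_cancel₀ _ hδpos.ne']
    obtain ⟨x, hxball, hxy⟩ := hsurj hymem
    exact ⟨x, hcb hxball, hxy⟩
end

section
/- Let X be a complex Banach space, K ⊆ X nonempty compact, U_m := K + B_{1/m}(0). Let γ : U_n → X be C¹ with γ|_K = 0 and sup_{x∈U_n} ‖γ'(x)‖_op ≤ 1/2, and let η := id + γ restricted to U_{6n}. Then the image η(U_{6n}) contains U_{12n}, and the inverse map σ := (η)⁻¹ restricted to U_{12n} satisfies sup_{x∈U_{12n}} ‖σ(x) − x‖ ≤ 1/(6n). -/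
open Metric Pointwise

/-- Lemma 3.8: if `γ` is continuously differentiable on `U_n = K + B_{1/n}(0)`,
vanishes on `K`, and `‖γ'‖_∞ ≤ 1/2`, then the image of `η := id + γ` restricted to
`U_{6n}` contains `U_{12n}`, and the inverse map `σ` satisfies
`‖σ(x) − x‖ ≤ 1/(6n)` on `U_{12n}`. -/
theorem stmt8 {X : Type*} [NormedAddCommGroup X] [NormedSpace ℂ X] [CompleteSpace X]
    (K : Set X) (hKc : IsCompact K) (hKne : K.Nonempty) (n : ℕ) (hn : 0 < n)
    (γ : X → X) (γ' : X → X →L[ℂ] X)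
    (hdiff : ∀ x ∈ K + ball (0 : X) (1 / (n : ℝ)), HasFDerivAt γ (γ' x) x)
    (hcont : ContinuousOn γ' (K + ball (0 : X) (1 / (n : ℝ))))
    (hbound : ∀ x ∈ K + ball (0 : X) (1 / (n : ℝ)), ‖γ' x‖ ≤ 1 / 2)
    (h0 : ∀ a ∈ K, γ a = 0) :
    K + ball (0 : X) (1 / (12 * (n : ℝ))) ⊆
        (fun x => x + γ x) '' (K + ball (0 : X) (1 / (6 * (n : ℝ)))) ∧
      ∃ σ : X → X, ∀ x ∈ K + ball (0 : X) (1 / (12 * (n : ℝ))),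
        σ x ∈ K + ball (0 : X) (1 / (6 * (n : ℝ))) ∧ σ x + γ (σ x) = x ∧
          ‖σ x - x‖ ≤ 1 / (6 * (n : ℝ)) := by
  have hn' : (0 : ℝ) < n := by exact_mod_cast hn
  have h6 : (0 : ℝ) < 1 / (6 * n) := by positivity
  have h12 : (0 : ℝ) < 1 / (12 * n) := by positivity
  have h6n : 1 / (6 * (n : ℝ)) ≤ 1 / n := by
    apply one_div_le_one_div_of_le hn'; nlinarith
  -- balls of radius 1/(6n) around points of K lie in U_n
  have hsub : ∀ a ∈ K, ball a (1 / (6 * (n : ℝ))) ⊆ K + ball (0 : X) (1 / (n : ℝ)) := by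
    intro a ha z hz
    refine Set.mem_add.2 ⟨a, ha, z - a, ?_, by abel⟩
    simp only [mem_ball, dist_zero_right]
    rw [mem_ball, dist_comm, dist_eq_norm] at hz
    have : ‖z - a‖ < 1 / (6 * (n : ℝ)) := by
      rw [show a - z = -(z - a) by abel, norm_neg] at hz; exact hz
    linarith
  -- Lipschitz bound for γ on any ball of radius 1/(6n) around a point of K
  have hlip : ∀ a ∈ K, ∀ x ∈ ball a (1 / (6 * (n : ℝ))), ∀ y ∈ ball a (1 / (6 * (n : ℝ))),
      ‖γ x - γ y‖ ≤ (1 / 2) * ‖x - y‖ := by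
    intro a ha x hx y hy
    exact (convex_ball a _).norm_image_sub_le_of_norm_hasFDerivWithin_le
      (fun z hz => ((hdiff z (hsub a ha hz)).hasFDerivWithinAt))
      (fun z hz => hbound z (hsub a ha hz)) hy hx
  -- main existence statement
  have H : ∀ x ∈ K + ball (0 : X) (1 / (12 * (n : ℝ))), ∃ y,
      y ∈ K + ball (0 : X) (1 / (6 * (n : ℝ))) ∧ y + γ y = x ∧ ‖y - x‖ ≤ 1 / (6 * (n : ℝ)) := by
    intro x hx
    obtain ⟨a, ha, v, hv, hav⟩ := Set.mem_add.1 hx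
    simp only [mem_ball, dist_zero_right] at hv
    set ρ : ℝ := ‖v‖ + 1 / (12 * (n : ℝ)) with hρ
    clear_value ρ
    have hρ0 : 0 ≤ ρ := by rw [hρ]; positivity
    have hρlt : ρ < 1 / (6 * (n : ℝ)) := by
      have h2 : 1 / (6 * (n : ℝ)) = 1 / (12 * n) + 1 / (12 * n) := by
        field_simp; ring
      rw [h2]; simpa [hρ] using hv
    have hball : closedBall a ρ ⊆ ball a (1 / (6 * (n : ℝ))) := fun z hz =>
      mem_ball.2 (lt_of_le_of_lt (mem_closedBall.1 hz) hρlt)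
    have happ : ApproximatesLinearOn (fun z => z + γ z) (ContinuousLinearMap.id ℂ X)
        (closedBall a ρ) (1 / 2 : NNReal) := by
      intro p hp q hq
      have hl := hlip a ha p (hball hp) q (hball hq)
      simp only [ContinuousLinearMap.id_apply]
      have heq : p + γ p - (q + γ q) - (p - q) = γ p - γ q := by abel
      rw [heq]
      simpa using hl
    let rinv : (ContinuousLinearMap.id ℂ X).NonlinearRightInverse :=
      ⟨id, 1, fun y => by simp, fun y => rfl⟩
    have hsurj := happ.surjOn_closedBall_of_nonlinearRightInverse rinv hρ0 Set.Subset.rfl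
    have hfa : a + γ a = a := by rw [h0 a ha, add_zero]
    have hcoef : ((rinv.nnnorm : ℝ)⁻¹ - ((1 / 2 : NNReal) : ℝ)) * ρ = ρ / 2 := by
      have : (rinv.nnnorm : ℝ) = 1 := rfl
      rw [this]; push_cast; ring
    have hx' : x ∈ closedBall ((fun z => z + γ z) a) (((rinv.nnnorm : ℝ)⁻¹ - ((1 / 2 : NNReal) : ℝ)) * ρ) := by
      simp only [hfa, hcoef, mem_closedBall]
      rw [← hav, dist_eq_norm, add_sub_cancel_left]
      simp only [hρ]; linarith
    obtain ⟨y, hy, hyx⟩ := hsurj hx'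
    simp only at hyx
    refine ⟨y, ?_, hyx, ?_⟩
    · refine Set.mem_add.2 ⟨a, ha, y - a, ?_, by abel⟩
      simp only [mem_ball, dist_zero_right]
      calc ‖y - a‖ ≤ ρ := by rw [← dist_eq_norm]; exact mem_closedBall.1 hy
        _ < 1 / (6 * (n : ℝ)) := hρlt
    · have hya : y - x = -(γ y) := by rw [← hyx]; abel
      rw [hya, norm_neg]
      have haK : a ∈ ball a (1 / (6 * (n : ℝ))) := mem_ball_self h6
      have := hlip a ha y (hball hy) a haK
      rw [h0 a ha, sub_zero] at this
      have hyar : ‖y - a‖ ≤ ρ := by rw [← dist_eq_norm]; exact mem_closedBall.1 hy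
      calc ‖γ y‖ ≤ 1 / 2 * ‖y - a‖ := this
        _ ≤ 1 / 2 * ρ := by linarith
        _ ≤ ρ := by linarith
        _ ≤ 1 / (6 * (n : ℝ)) := le_of_lt hρlt
  refine ⟨?_, ?_⟩
  · intro x hx
    obtain ⟨y, hy1, hy2, _⟩ := H x hx
    exact ⟨y, hy1, hy2⟩
  · choose! σ h1 h2 h3 using H
    exact ⟨σ, fun x hx => ⟨h1 x hx, h2 x hx, h3 x hx⟩⟩
end

section
/- Let X be a complex Banach space and for s ∈ ℕ let D_s(X) be the Banach space of X-valued Dirichlet series absolutely convergent on {Re z ≥ s}. Then for every s, with t := s+2, for all u ≥ t the norms ‖·‖_{(t)} and ‖·‖_{(u)} induce the same topology on the unit ball Ω := {γ : ‖γ‖_{(s)} < 1}; namely, for every ε > 0 there exists n₀ such that, with δ := n₀^{t−u}·ε/2, any γ with ‖γ‖_{(s)} < 2 and ‖γ‖_{(u)} < δ satisfies ‖γ‖_{(t)} < ε. -/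
open Real Finset

/-- Step estimate for compact regularity of `D_∞(X)` (Proposition 5.3): with `t := s + 2`
and any `u ≥ t`, for every `ε > 0` there is `n₀` such that, with `δ := n₀^{t-u}·ε/2`,
every Dirichlet series `γ` with `‖γ‖₍ₛ₎ < 2` and `‖γ‖₍ᵤ₎ < δ` satisfies `‖γ‖₍ₜ₎ < ε`;
hence the `‖·‖₍ₜ₎`- and `‖·‖₍ᵤ₎`-topologies agree on the unit ball of `D_s(X)`.
(Coefficients are indexed so that `a n` is the coefficient of `(n+1)^{-z}`.) -/
theorem stmt13 {X : Type*} [NormedAddCommGroup X] (s u : ℝ) (hu : s + 2 ≤ u)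
    (ε : ℝ) (hε : 0 < ε) :
    ∃ n₀ : ℕ, 0 < n₀ ∧ ∀ a : ℕ → X,
      Summable (fun n => ‖a n‖ * ((n : ℝ) + 1) ^ (-s)) →
      (∑' n, ‖a n‖ * ((n : ℝ) + 1) ^ (-s)) < 2 →
      (∑' n, ‖a n‖ * ((n : ℝ) + 1) ^ (-u)) < (n₀ : ℝ) ^ (s + 2 - u) * ε / 2 →
      (∑' n, ‖a n‖ * ((n : ℝ) + 1) ^ (-(s + 2))) < ε := by
  obtain ⟨N, hN⟩ := exists_nat_gt (4 / ε)
  set n₀ : ℕ := max N 1 with hn₀def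
  have hn₀1 : (1 : ℕ) ≤ n₀ := le_max_right _ _
  have hn₀pos : (0 : ℝ) < (n₀ : ℝ) := by exact_mod_cast hn₀1
  have hn₀big : 4 / ε < (n₀ : ℝ) := lt_of_lt_of_le hN (by exact_mod_cast le_max_left N 1)
  refine ⟨n₀, hn₀1, fun a hs h2 hδ => ?_⟩
  have hb : ∀ n : ℕ, (0 : ℝ) < (n : ℝ) + 1 := fun n => by positivity
  have hterm_nonneg : ∀ (v : ℝ) (n : ℕ), (0 : ℝ) ≤ ‖a n‖ * ((n : ℝ) + 1) ^ (-v) :=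
    fun v n => by positivity
  -- summability at s+2 and u
  have hst : Summable (fun n => ‖a n‖ * ((n : ℝ) + 1) ^ (-(s + 2))) :=
    hs.of_nonneg_of_le (hterm_nonneg _) (fun n => by
      have : ((n : ℝ) + 1) ^ (-(s + 2)) ≤ ((n : ℝ) + 1) ^ (-s) :=
        rpow_le_rpow_of_exponent_le (by linarith [hb n]) (by linarith)
      exact mul_le_mul_of_nonneg_left this (norm_nonneg _))
  have hsu : Summable (fun n => ‖a n‖ * ((n : ℝ) + 1) ^ (-u)) :=
    hs.of_nonneg_of_le (hterm_nonneg _) (fun n => by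
      have : ((n : ℝ) + 1) ^ (-u) ≤ ((n : ℝ) + 1) ^ (-s) :=
        rpow_le_rpow_of_exponent_le (by linarith [hb n]) (by linarith)
      exact mul_le_mul_of_nonneg_left this (norm_nonneg _))
  have hsplit := Summable.sum_add_tsum_nat_add n₀ hst
  rw [← hsplit]
  -- head bound
  have hhead : (∑ i ∈ range n₀, ‖a i‖ * ((i : ℝ) + 1) ^ (-(s + 2))) < ε / 2 := by
    have h1 : (∑ i ∈ range n₀, ‖a i‖ * ((i : ℝ) + 1) ^ (-(s + 2)))
        ≤ (n₀ : ℝ) ^ (u - (s + 2)) * ∑ i ∈ range n₀, ‖a i‖ * ((i : ℝ) + 1) ^ (-u) := by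
      rw [mul_sum]
      refine sum_le_sum fun i hi => ?_
      have hi' : (i : ℝ) + 1 ≤ (n₀ : ℝ) := by
        have : i + 1 ≤ n₀ := mem_range.mp hi
        exact_mod_cast this
      have hexp : ((i : ℝ) + 1) ^ (u - (s + 2)) ≤ (n₀ : ℝ) ^ (u - (s + 2)) :=
        rpow_le_rpow (by linarith [hb i]) hi' (by linarith)
      have heq : ((i : ℝ) + 1) ^ (-(s + 2))
          = ((i : ℝ) + 1) ^ (-u) * ((i : ℝ) + 1) ^ (u - (s + 2)) := by
        rw [← rpow_add (hb i)]; ring_nf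
      calc ‖a i‖ * ((i : ℝ) + 1) ^ (-(s + 2))
          = ‖a i‖ * ((i : ℝ) + 1) ^ (-u) * ((i : ℝ) + 1) ^ (u - (s + 2)) := by
            rw [heq]; ring
        _ ≤ ‖a i‖ * ((i : ℝ) + 1) ^ (-u) * (n₀ : ℝ) ^ (u - (s + 2)) := by
            exact mul_le_mul_of_nonneg_left hexp (by positivity)
        _ = (n₀ : ℝ) ^ (u - (s + 2)) * (‖a i‖ * ((i : ℝ) + 1) ^ (-u)) := by ring
    have h2' : (∑ i ∈ range n₀, ‖a i‖ * ((i : ℝ) + 1) ^ (-u))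
        ≤ ∑' n, ‖a n‖ * ((n : ℝ) + 1) ^ (-u) :=
      Summable.sum_le_tsum _ (fun i _ => hterm_nonneg _ i) hsu
    have hpow : (0 : ℝ) < (n₀ : ℝ) ^ (u - (s + 2)) := rpow_pos_of_pos hn₀pos _
    have h3 : (n₀ : ℝ) ^ (u - (s + 2)) * (∑' n, ‖a n‖ * ((n : ℝ) + 1) ^ (-u))
        < (n₀ : ℝ) ^ (u - (s + 2)) * ((n₀ : ℝ) ^ (s + 2 - u) * ε / 2) := by
      have := mul_lt_mul_of_pos_left hδ hpow
      linarith
    have h4 : (n₀ : ℝ) ^ (u - (s + 2)) * ((n₀ : ℝ) ^ (s + 2 - u) * ε / 2) = ε / 2 := by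
      rw [show (n₀ : ℝ) ^ (u - (s + 2)) * ((n₀ : ℝ) ^ (s + 2 - u) * ε / 2)
          = ((n₀ : ℝ) ^ (u - (s + 2)) * (n₀ : ℝ) ^ (s + 2 - u)) * ε / 2 by ring,
        ← rpow_add hn₀pos]
      norm_num
    calc (∑ i ∈ range n₀, ‖a i‖ * ((i : ℝ) + 1) ^ (-(s + 2)))
        ≤ (n₀ : ℝ) ^ (u - (s + 2)) * ∑ i ∈ range n₀, ‖a i‖ * ((i : ℝ) + 1) ^ (-u) := h1
      _ ≤ (n₀ : ℝ) ^ (u - (s + 2)) * (∑' n, ‖a n‖ * ((n : ℝ) + 1) ^ (-u)) :=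
          mul_le_mul_of_nonneg_left h2' hpow.le
      _ < ε / 2 := by rw [← h4]; exact h3
  -- tail bound
  have htail : (∑' i, ‖a (i + n₀)‖ * (((i + n₀ : ℕ) : ℝ) + 1) ^ (-(s + 2))) ≤ ε / 2 := by
    have hshift_s : Summable (fun i => ‖a (i + n₀)‖ * (((i + n₀ : ℕ) : ℝ) + 1) ^ (-s)) :=
      (summable_nat_add_iff (f := fun n => ‖a n‖ * ((n : ℝ) + 1) ^ (-s)) n₀).mpr hs
    have hle : ∀ i : ℕ, ‖a (i + n₀)‖ * (((i + n₀ : ℕ) : ℝ) + 1) ^ (-(s + 2))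
        ≤ (n₀ : ℝ) ^ (-2 : ℝ) * (‖a (i + n₀)‖ * (((i + n₀ : ℕ) : ℝ) + 1) ^ (-s)) := by
      intro i
      set m : ℕ := i + n₀
      have hmn : (n₀ : ℝ) ≤ (m : ℝ) + 1 := by
        have : n₀ ≤ m + 1 := by omega
        exact_mod_cast this
      have hexp : ((m : ℝ) + 1) ^ (-2 : ℝ) ≤ (n₀ : ℝ) ^ (-2 : ℝ) :=
        rpow_le_rpow_of_nonpos hn₀pos hmn (by norm_num)
      have heq : ((m : ℝ) + 1) ^ (-(s + 2))
          = ((m : ℝ) + 1) ^ (-s) * ((m : ℝ) + 1) ^ (-2 : ℝ) := by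
        rw [← rpow_add (hb m)]; ring_nf
      calc ‖a m‖ * ((m : ℝ) + 1) ^ (-(s + 2))
          = ‖a m‖ * ((m : ℝ) + 1) ^ (-s) * ((m : ℝ) + 1) ^ (-2 : ℝ) := by rw [heq]; ring
        _ ≤ ‖a m‖ * ((m : ℝ) + 1) ^ (-s) * (n₀ : ℝ) ^ (-2 : ℝ) :=
            mul_le_mul_of_nonneg_left hexp (by positivity)
        _ = (n₀ : ℝ) ^ (-2 : ℝ) * (‖a m‖ * ((m : ℝ) + 1) ^ (-s)) := by ring
    have hsum1 : (∑' i, ‖a (i + n₀)‖ * (((i + n₀ : ℕ) : ℝ) + 1) ^ (-(s + 2)))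
        ≤ (n₀ : ℝ) ^ (-2 : ℝ) * ∑' i, ‖a (i + n₀)‖ * (((i + n₀ : ℕ) : ℝ) + 1) ^ (-s) := by
      rw [← tsum_mul_left]
      exact Summable.tsum_le_tsum hle ((summable_nat_add_iff (f := fun n => ‖a n‖ * ((n : ℝ) + 1) ^ (-(s + 2))) n₀).mpr hst)
        (hshift_s.mul_left _)
    have hsum2 : (∑' i, ‖a (i + n₀)‖ * (((i + n₀ : ℕ) : ℝ) + 1) ^ (-s)) < 2 := by
      have := Summable.sum_add_tsum_nat_add n₀ hs
      have hhd : (0 : ℝ) ≤ ∑ i ∈ range n₀, ‖a i‖ * ((i : ℝ) + 1) ^ (-s) :=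
        sum_nonneg fun i _ => hterm_nonneg _ i
      linarith
    have hsmall : (n₀ : ℝ) ^ (-2 : ℝ) ≤ ε / 4 := by
      rw [rpow_neg hn₀pos.le, show (2 : ℝ) = ((2 : ℕ) : ℝ) by norm_num, rpow_natCast]
      rw [inv_le_comm₀ (by positivity) (by positivity), inv_div]
      have h1r : (1 : ℝ) ≤ (n₀ : ℝ) := by exact_mod_cast hn₀1
      have hsq : (n₀ : ℝ) ≤ (n₀ : ℝ) ^ 2 := by nlinarith
      linarith
    have htnn : (0 : ℝ) ≤ ∑' i, ‖a (i + n₀)‖ * (((i + n₀ : ℕ) : ℝ) + 1) ^ (-s) :=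
      tsum_nonneg fun i => hterm_nonneg _ _
    calc (∑' i, ‖a (i + n₀)‖ * (((i + n₀ : ℕ) : ℝ) + 1) ^ (-(s + 2)))
        ≤ (n₀ : ℝ) ^ (-2 : ℝ) * ∑' i, ‖a (i + n₀)‖ * (((i + n₀ : ℕ) : ℝ) + 1) ^ (-s) := hsum1
      _ ≤ (ε / 4) * 2 := by
          apply mul_le_mul hsmall hsum2.le htnn (by linarith)
      _ = ε / 2 := by ring
  linarith
end

section
/- Let X be a complex Banach space, K ⊆ X nonempty compact, U_n := K + B_{1/n}(0), and E_n := Hol_b(U_n, X)_K the Banach space of bounded analytic maps U_n → X vanishing on K, with sup-norm. Then for every n, setting m := 6n, for every l ≥ m and every ε > 0 there exists δ > 0 such that any γ₁, γ₂ in the unit ball of E_n with ‖γ₁|_{U_l} − γ₂|_{U_l}‖_∞ ≤ δ satisfy ‖γ₁|_{U_m} − γ₂|_{U_m}‖_∞ ≤ ε. In other words, all the norms of E_l for l ≥ 6n induce the same topology on the unit ball of E_n. -/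
/-!
Fix `a ∈ K` and `v` with `‖v‖ < 1/(6n)`, and look at `γ₁ - γ₂` along the complex line
`λ ↦ a + λ • v`. This is holomorphic and bounded by `2` on the disc `|λ| ≤ 6`, and bounded by
`sup_{U_l} ‖γ₁ - γ₂‖` on the circle `|λ| = 6n/l`. Cauchy's estimates on the two circles bound
the `k`-th Taylor term at `λ = 1` by `2 · 6⁻ᵏ` and by `sup_{U_l} ‖γ₁ - γ₂‖ · (l/(6n))ᵏ`; the
first bound makes the tail of the Taylor series small, the second one the finitely many low
order terms.
-/

open Metric Pointwise Finset Filter Topology Nat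

theorem HasSum.norm_le_of_norm_le_two_geometric {E : Type*} [SeminormedAddCommGroup E]
    {f : ℕ → E} {y : E} (hf : HasSum f y)
    {δ s M q : ℝ} (hq₀ : 0 ≤ q) (hq : q < 1) (hδ : ∀ k, ‖f k‖ ≤ δ * s ^ k)
    (hM : ∀ k, ‖f k‖ ≤ M * q ^ k) (k₀ : ℕ) :
    ‖y‖ ≤ δ * ∑ k ∈ range k₀, s ^ k + M * q ^ k₀ / (1 - q) := by
  have hhead : ‖∑ k ∈ range k₀, f k‖ ≤ δ * ∑ k ∈ range k₀, s ^ k := by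
    rw [mul_sum]
    exact norm_sum_le_of_le _ fun k _ ↦ hδ k
  have htail : ‖y - ∑ k ∈ range k₀, f k‖ ≤ M * q ^ k₀ / (1 - q) := by
    refine ((hasSum_nat_add_iff' k₀).2 hf).norm_le_of_bounded
      ((hasSum_geometric_of_lt_one hq₀ hq).mul_left (M * q ^ k₀)) fun k ↦ ?_
    calc ‖f (k + k₀)‖ ≤ M * q ^ (k + k₀) := hM _
      _ = M * q ^ k₀ * q ^ k := by ring
  calc ‖y‖ = ‖∑ k ∈ range k₀, f k + (y - ∑ k ∈ range k₀, f k)‖ := by rw [add_sub_cancel]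
    _ ≤ _ := (norm_add_le _ _).trans (add_le_add hhead htail)

section TaylorEstimates

variable {E : Type*} [NormedAddCommGroup E] [NormedSpace ℂ E] [CompleteSpace E]

theorem norm_taylorTerm_le_of_forall_mem_sphere_norm_le {g : ℂ → E} {c z : ℂ} {ρ C : ℝ}
    (hρ : 0 < ρ) (hg : DifferentiableOn ℂ g (closedBall c ρ))
    (hC : ∀ w ∈ sphere c ρ, ‖g w‖ ≤ C) (k : ℕ) :
    ‖(k ! : ℂ)⁻¹ • (z - c) ^ k • iteratedDeriv k g c‖ ≤ C * (‖z - c‖ / ρ) ^ k := by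
  have hcauchy := Complex.norm_iteratedDeriv_le_of_forall_mem_sphere_norm_le k hρ
    (hg.diffContOnCl_ball subset_rfl) hC
  have hk : (0 : ℝ) < k ! := mod_cast k.factorial_pos
  rw [norm_smul, norm_smul, norm_inv, norm_pow, Complex.norm_natCast]
  calc (k ! : ℝ)⁻¹ * (‖z - c‖ ^ k * ‖iteratedDeriv k g c‖)
      ≤ (k ! : ℝ)⁻¹ * (‖z - c‖ ^ k * (k ! * C / ρ ^ k)) := by gcongr
    _ = C * (‖z - c‖ / ρ) ^ k := by rw [div_pow]; field_simp

theorem exists_pos_norm_le_of_norm_le_on_inner_sphere {R r M ε : ℝ} {c z : ℂ} (hr : 0 < r)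
    (hrR : r ≤ R) (hz : z ∈ ball c R) (hε : 0 < ε) :
    ∃ δ > 0, ∀ g : ℂ → E, DifferentiableOn ℂ g (closedBall c R) →
      (∀ w ∈ sphere c R, ‖g w‖ ≤ M) → (∀ w ∈ sphere c r, ‖g w‖ ≤ δ) → ‖g z‖ ≤ ε := by
  have hR : 0 < R := hr.trans_le hrR
  set q := ‖z - c‖ / R
  set s := ‖z - c‖ / r
  have hq₀ : 0 ≤ q := by positivity
  have hq : q < 1 := (div_lt_one hR).2 (mem_ball_iff_norm.1 hz)
  have htail : Tendsto (fun k : ℕ ↦ M * q ^ k / (1 - q)) atTop (𝓝 0) := by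
    simpa using ((tendsto_pow_atTop_nhds_zero_of_lt_one hq₀ hq).const_mul M).div_const (1 - q)
  obtain ⟨k₀, hk₀⟩ := (htail.eventually (gt_mem_nhds (half_pos hε))).exists
  refine ⟨ε / 2 / (∑ k ∈ range k₀, s ^ k + 1), by positivity, fun g hg hM hδ ↦ ?_⟩
  have hhead : ε / 2 / (∑ k ∈ range k₀, s ^ k + 1) * ∑ k ∈ range k₀, s ^ k ≤ ε / 2 := by
    rw [div_mul_eq_mul_div, div_le_iff₀ (by positivity)]
    nlinarith
  have hsum := Complex.hasSum_taylorSeries_on_ball (hg.mono ball_subset_closedBall) hz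
  calc ‖g z‖ ≤ ε / 2 / (∑ k ∈ range k₀, s ^ k + 1) * ∑ k ∈ range k₀, s ^ k
        + M * q ^ k₀ / (1 - q) :=
      hsum.norm_le_of_norm_le_two_geometric hq₀ hq
        (norm_taylorTerm_le_of_forall_mem_sphere_norm_le hr
          (hg.mono (closedBall_subset_closedBall hrR)) hδ)
        (norm_taylorTerm_le_of_forall_mem_sphere_norm_le hR hg hM) k₀
    _ ≤ ε := by linarith

end TaylorEstimates

theorem add_smul_mem_add_ball {𝕜 X : Type*} [NormedField 𝕜] [SeminormedAddCommGroup X]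
    [NormedSpace 𝕜 X] {K : Set X} {a v : X} {t : 𝕜} {ρ : ℝ} (ha : a ∈ K)
    (ht : ‖t‖ * ‖v‖ < ρ) : a + t • v ∈ K + ball (0 : X) ρ :=
  Set.add_mem_add ha (mem_ball_zero_iff.2 (by rwa [norm_smul]))

theorem stmt14_general {X : Type*} [NormedAddCommGroup X] [NormedSpace ℂ X] [CompleteSpace X]
    (K : Set X) (n : ℕ) (hn : 0 < n)
    (l : ℕ) (hl : 6 * n ≤ l) (ε : ℝ) (hε : 0 < ε) :
    ∃ δ > (0 : ℝ), ∀ γ₁ γ₂ : X → X,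
      AnalyticOnNhd ℂ γ₁ (K + ball (0 : X) (1 / (n : ℝ))) →
      AnalyticOnNhd ℂ γ₂ (K + ball (0 : X) (1 / (n : ℝ))) →
      (∀ a ∈ K, γ₁ a = 0) → (∀ a ∈ K, γ₂ a = 0) →
      (∀ x ∈ K + ball (0 : X) (1 / (n : ℝ)), ‖γ₁ x‖ ≤ 1) →
      (∀ x ∈ K + ball (0 : X) (1 / (n : ℝ)), ‖γ₂ x‖ ≤ 1) →
      (∀ x ∈ K + ball (0 : X) (1 / (l : ℝ)), ‖γ₁ x - γ₂ x‖ ≤ δ) →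
      ∀ x ∈ K + ball (0 : X) (1 / (6 * (n : ℝ))), ‖γ₁ x - γ₂ x‖ ≤ ε := by
  have hn' : (0 : ℝ) < n := mod_cast hn
  have hl' : (6 * n : ℝ) ≤ l := mod_cast hl
  have hl₀ : (0 : ℝ) < l := by linarith
  obtain ⟨δ, hδ, hδg⟩ := exists_pos_norm_le_of_norm_le_on_inner_sphere (E := X) (R := 6) (M := 2)
    (c := 0) (z := 1) (show (0 : ℝ) < 6 * n / l by positivity)
    (by rw [div_le_iff₀ (by positivity)]; nlinarith) (by simp) hε
  refine ⟨δ, hδ, fun γ₁ γ₂ h₁ h₂ _ _ hb₁ hb₂ hδl x hx ↦ ?_⟩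
  obtain ⟨a, ha, v, hv, rfl⟩ := hx
  rw [mem_ball_zero_iff, lt_div_iff₀' (by positivity)] at hv
  have hline : ∀ t : ℂ, ‖t‖ ≤ 6 → a + t • v ∈ K + ball (0 : X) (1 / n) := fun t ht ↦
    add_smul_mem_add_ball ha <| by
      rw [lt_div_iff₀ hn']
      nlinarith [mul_le_mul_of_nonneg_right ht (by positivity : 0 ≤ ‖v‖ * n)]
  have hg : DifferentiableOn ℂ (fun t : ℂ ↦ γ₁ (a + t • v) - γ₂ (a + t • v)) (closedBall 0 6) := by
    have hmaps : Set.MapsTo (fun t : ℂ ↦ a + t • v) (closedBall 0 6) _ :=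
      fun t ht ↦ hline t (mem_closedBall_zero_iff.1 ht)
    have hlin : DifferentiableOn ℂ (fun t : ℂ ↦ a + t • v) (closedBall 0 6) := by fun_prop
    exact (h₁.differentiableOn.comp hlin hmaps).sub (h₂.differentiableOn.comp hlin hmaps)
  have hbound : ∀ t ∈ sphere (0 : ℂ) 6, ‖γ₁ (a + t • v) - γ₂ (a + t • v)‖ ≤ 2 := fun t ht ↦ by
    have hmem := hline t (mem_sphere_zero_iff_norm.1 ht).le
    linarith [norm_sub_le (γ₁ (a + t • v)) (γ₂ (a + t • v)), hb₁ _ hmem, hb₂ _ hmem]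
  have hsmall : ∀ t ∈ sphere (0 : ℂ) (6 * n / l), ‖γ₁ (a + t • v) - γ₂ (a + t • v)‖ ≤ δ :=
    fun t ht ↦ hδl _ <| add_smul_mem_add_ball ha <| by
      rw [mem_sphere_zero_iff_norm.1 ht, div_mul_eq_mul_div, div_lt_div_iff₀ hl₀ hl₀]
      nlinarith
  simpa only [one_smul] using hδg _ hg hbound hsmall

/-- Key estimate in Proposition 3.3 (compact regularity of `Germ(K,X)_K`): with
`U_n = K + B_{1/n}(0)` around a nonempty compact set `K` in a complex Banach space, for
`m := 6n` and any `l ≥ m`, the sup-norms over `U_l` and over `U_m` induce the same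
topology on the unit ball of `Hol_b(U_n, X)_K`: for every `ε > 0` there is a `δ > 0` such
that bounded analytic maps `γ₁, γ₂` on `U_n` vanishing on `K` with sup-norm at most `1`
and `sup_{U_l} ‖γ₁ - γ₂‖ ≤ δ` satisfy `sup_{U_{6n}} ‖γ₁ - γ₂‖ ≤ ε`. -/
theorem stmt14 {X : Type*} [NormedAddCommGroup X] [NormedSpace ℂ X] [CompleteSpace X]
    (K : Set X) (hKc : IsCompact K) (hKne : K.Nonempty) (n : ℕ) (hn : 0 < n)
    (l : ℕ) (hl : 6 * n ≤ l) (ε : ℝ) (hε : 0 < ε) :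
    ∃ δ > (0 : ℝ), ∀ γ₁ γ₂ : X → X,
      AnalyticOnNhd ℂ γ₁ (K + ball (0 : X) (1 / (n : ℝ))) →
      AnalyticOnNhd ℂ γ₂ (K + ball (0 : X) (1 / (n : ℝ))) →
      (∀ a ∈ K, γ₁ a = 0) → (∀ a ∈ K, γ₂ a = 0) →
      (∀ x ∈ K + ball (0 : X) (1 / (n : ℝ)), ‖γ₁ x‖ ≤ 1) →
      (∀ x ∈ K + ball (0 : X) (1 / (n : ℝ)), ‖γ₂ x‖ ≤ 1) →
      (∀ x ∈ K + ball (0 : X) (1 / (l : ℝ)), ‖γ₁ x - γ₂ x‖ ≤ δ) →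
      ∀ x ∈ K + ball (0 : X) (1 / (6 * (n : ℝ))), ‖γ₁ x - γ₂ x‖ ≤ ε :=
  stmt14_general K n hn l hl ε hε
end

section
/- Let E = ⋃_{n∈ℕ} E_n be the union of an increasing sequence of complex normed spaces with inclusion bonding maps of operator norm at most 1, equipped with the Hausdorff locally convex direct limit topology, and let F be a complex Banach space. Fix R > 0 and U := ⋃_n B_R^{E_n}(0). Let f : U → F satisfy f(0) = 0, and suppose each f_n := f|_{B_R^{E_n}(0)} is complex analytic and bounded. Then f is continuous at 0: for every ε > 0 there is a sequence (δ_n) of positive reals such that f maps V(δ₁, δ₂, …) := ⋃_m (B_{δ₁}^{E_1}(0) + ⋯ + B_{δ_m}^{E_m}(0)) into B_ε^F(0), and V(δ₁, δ₂, …) ⊆ U. -/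
open Metric Finset

/-!
Fix bounds `‖f ∘ uₙ‖ ≤ Cₙ` on the balls `B_R(0) ⊆ Xₙ`. By the Schwarz lemma, `f ∘ uₙ` is
`4Cₙ/R`-Lipschitz on `B_{R/2}(0)`. Writing a point of `V(δ)` as `x₀ + ⋯ + x_{m-1}` with
`xᵢ ∈ B_{δᵢ}(Xᵢ)`, the partial sum `x₀ + ⋯ + x_{n-1}` lifts to `Xₙ` with norm at most
`δ₀ + ⋯ + δ_{n-1}` because the bonding maps are contractions. So adding `xₙ` changes `f` by at
most `4Cₙδₙ/R`, and `δₙ = 2⁻ⁿ⁻¹ min(R/4, εR/(8(Cₙ+1)))` makes these increments sum to less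
than `ε` while keeping all partial sums in `B_{R/4}`.
-/

lemma sum_range_div_two_pow_succ_le {c : ℝ} (hc : 0 ≤ c) (m : ℕ) :
    ∑ i ∈ range m, c / 2 ^ (i + 1) ≤ c := by
  have hgeom := sum_geometric_two_le m
  calc ∑ i ∈ range m, c / 2 ^ (i + 1) = c / 2 * ∑ i ∈ range m, (1 / 2 : ℝ) ^ i := by
        rw [mul_sum]
        refine sum_congr rfl fun i _ => ?_
        rw [pow_succ, one_div, inv_pow]
        ring
    _ ≤ c := by nlinarith

section Lift

variable {𝕜 E : Type*} [Semiring 𝕜] [AddCommMonoid E] [Module 𝕜 E]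
  {X : ℕ → Type*} [∀ n, SeminormedAddCommGroup (X n)] [∀ n, Module 𝕜 (X n)]
  {u : ∀ n, X n →ₗ[𝕜] E} {j : ∀ n, X n →ₗ[𝕜] X (n + 1)}

lemma exists_lift_of_le (hj : ∀ n (x : X n), ‖j n x‖ ≤ ‖x‖)
    (hcomp : ∀ n (x : X n), u (n + 1) (j n x) = u n x) {i n : ℕ} (hin : i ≤ n) (x : X i) :
    ∃ y : X n, u n y = u i x ∧ ‖y‖ ≤ ‖x‖ := by
  induction n, hin using Nat.le_induction with
  | base => exact ⟨x, rfl, le_rfl⟩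
  | succ n _ ih =>
    obtain ⟨y, hy, hyx⟩ := ih
    exact ⟨j n y, (hcomp n y).trans hy, (hj n y).trans hyx⟩

lemma exists_lift_sum (hj : ∀ n (x : X n), ‖j n x‖ ≤ ‖x‖)
    (hcomp : ∀ n (x : X n), u (n + 1) (j n x) = u n x) {m : ℕ} (w : (i : Fin m) → X i) :
    ∃ y : X m, u m y = ∑ i : Fin m, u i (w i) ∧ ‖y‖ ≤ ∑ i, ‖w i‖ := by
  induction m with
  | zero => exact ⟨0, by simp, by simp⟩
  | succ m ih =>
    obtain ⟨y, hy, hyw⟩ := ih fun i => w i.castSucc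
    obtain ⟨y', hy', hy'y⟩ := exists_lift_of_le hj hcomp m.le_succ y
    obtain ⟨z, hz, hzw⟩ := exists_lift_of_le hj hcomp m.le_succ (w (Fin.last m))
    refine ⟨y' + z, ?_, ?_⟩
    · rw [map_add, hy', hz, hy, Fin.sum_univ_castSucc]
      rfl
    · rw [Fin.sum_univ_castSucc]
      exact (norm_add_le _ _).trans (add_le_add (hy'y.trans hyw) hzw)

lemma norm_apply_sum_le {F : Type*} [SeminormedAddCommGroup F]
    (hj : ∀ n (x : X n), ‖j n x‖ ≤ ‖x‖) (hcomp : ∀ n (x : X n), u (n + 1) (j n x) = u n x)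
    {f : E → F} (hf0 : f 0 = 0) {δ η : ℕ → ℝ}
    (hinc : ∀ n (a v : X n), ‖a‖ ≤ ∑ i ∈ range n, δ i → ‖v‖ < δ n →
      ‖f (u n (a + v)) - f (u n a)‖ ≤ η n)
    {m : ℕ} (w : (i : Fin m) → X i) (hw : ∀ i, ‖w i‖ < δ i) :
    ‖f (∑ i : Fin m, u i (w i))‖ ≤ ∑ i ∈ range m, η i := by
  induction m with
  | zero => simp [hf0]
  | succ m ih =>
    obtain ⟨a, ha, haw⟩ := exists_lift_sum hj hcomp fun i => w i.castSucc
    have ha_le : ‖a‖ ≤ ∑ i ∈ range m, δ i := by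
      refine haw.trans ?_
      rw [← Fin.sum_univ_eq_sum_range]
      exact sum_le_sum fun i _ => (hw i.castSucc).le
    have hstep := hinc m a (w (Fin.last m)) ha_le (hw _)
    rw [map_add, ha] at hstep
    rw [Fin.sum_univ_castSucc, sum_range_succ]
    calc ‖f (∑ i : Fin m, u i (w i.castSucc) + u m (w (Fin.last m)))‖
        ≤ ‖f (∑ i : Fin m, u i (w i.castSucc))‖ + η m := by
          have := norm_le_insert' (f (∑ i : Fin m, u i (w i.castSucc) + u m (w (Fin.last m))))
            (f (∑ i : Fin m, u i (w i.castSucc)))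
          linarith
      _ ≤ ∑ i ∈ range m, η i + η m := by gcongr; exact ih _ fun i => hw i.castSucc

end Lift

lemma norm_sub_le_of_norm_le_on_ball {X F : Type*} [NormedAddCommGroup X] [NormedSpace ℂ X]
    [NormedAddCommGroup F] [NormedSpace ℂ F] {g : X → F} {R C r : ℝ}
    (hg : DifferentiableOn ℂ g (ball 0 R)) (hC : ∀ y ∈ ball (0 : X) R, ‖g y‖ ≤ C)
    {a v : X} (ha : ‖a‖ + r ≤ R) (hv : ‖v‖ < r) :
    ‖g (a + v) - g a‖ ≤ 2 * C / r * ‖v‖ := by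
  have hball : ball a r ⊆ ball 0 R := ball_subset_ball' (by simpa [add_comm] using ha)
  have hmaps : Set.MapsTo g (ball a r) (closedBall (g a) (2 * C)) := by
    intro y hy
    rw [mem_closedBall, dist_eq_norm, two_mul]
    have hra : 0 < r := (norm_nonneg v).trans_lt hv
    exact (norm_sub_le _ _).trans
      (add_le_add (hC y (hball hy)) (hC a (hball (mem_ball_self hra))))
  have hmem : a + v ∈ ball a r := by simpa using hv
  simpa [dist_eq_norm] using Complex.dist_le_div_mul_dist_of_mapsTo_ball (hg.mono hball) hmaps hmem

lemma exists_radii_summable_increments {R ε : ℝ} (hR : 0 < R) (hε : 0 < ε) {C : ℕ → ℝ}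
    (hC : ∀ n, 0 ≤ C n) :
    ∃ δ : ℕ → ℝ, (∀ n, 0 < δ n) ∧ (∀ m, ∑ i ∈ range m, δ i ≤ R / 4) ∧
      ∀ n, 4 * C n / R * δ n ≤ ε / 2 / 2 ^ (n + 1) := by
  refine ⟨fun n => min (R / 4) (ε * R / (8 * (C n + 1))) / 2 ^ (n + 1), fun n => ?_,
    fun m => ?_, fun n => ?_⟩
  · have := hC n
    positivity
  · refine (sum_le_sum fun i _ => ?_).trans (sum_range_div_two_pow_succ_le (by positivity) m)
    gcongr
    exact min_le_left _ _
  · have hCn := hC n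
    have hmin : min (R / 4) (ε * R / (8 * (C n + 1))) ≤ ε * R / (8 * (C n + 1)) :=
      min_le_right _ _
    rw [le_div_iff₀ (by positivity)] at hmin
    rw [mul_div_assoc', div_le_div_iff_of_pos_right (by positivity), div_mul_eq_mul_div,
      div_le_iff₀ hR]
    nlinarith [min_le_left (R / 4) (ε * R / (8 * (C n + 1))), hε.le]

theorem stmt15_general {F : Type*} [NormedAddCommGroup F] [NormedSpace ℂ F]
    {E : Type*} [AddCommGroup E] [Module ℂ E]
    (X : ℕ → Type*) [∀ n, NormedAddCommGroup (X n)] [∀ n, NormedSpace ℂ (X n)]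
    (u : ∀ n, X n →ₗ[ℂ] E)
    (j : ∀ n, X n →ₗ[ℂ] X (n + 1)) (hj : ∀ n (x : X n), ‖j n x‖ ≤ ‖x‖)
    (hcomp : ∀ n (x : X n), u (n + 1) (j n x) = u n x)
    (R : ℝ) (hR : 0 < R)
    (f : E → F) (hf0 : f 0 = 0)
    (hanal : ∀ n, AnalyticOnNhd ℂ (fun y : X n => f (u n y)) (ball 0 R))
    (hbdd : ∀ n, ∃ C, ∀ y ∈ ball (0 : X n) R, ‖f (u n y)‖ ≤ C)
    (ε : ℝ) (hε : 0 < ε) :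
    ∃ δ : ℕ → ℝ, (∀ i, 0 < δ i) ∧
      ∀ x : E,
        (∃ (m : ℕ) (w : (i : Fin m) → X i.val),
            (∀ i, ‖w i‖ < δ i.val) ∧ x = ∑ i, u i.val (w i)) →
        (∃ n, ∃ y : X n, ‖y‖ < R ∧ x = u n y) ∧ ‖f x‖ < ε := by
  choose C hC using hbdd
  have hC0 : ∀ n, 0 ≤ C n := fun n => by simpa [hf0] using hC n 0 (mem_ball_self hR)
  obtain ⟨δ, hδpos, hδsum, hδinc⟩ := exists_radii_summable_increments hR hε hC0
  have hinc : ∀ n (a v : X n), ‖a‖ ≤ ∑ i ∈ range n, δ i → ‖v‖ < δ n →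
      ‖f (u n (a + v)) - f (u n a)‖ ≤ ε / 2 / 2 ^ (n + 1) := by
    intro n a v ha hv
    have hδR : δ n ≤ R / 4 :=
      (single_le_sum (fun i _ => (hδpos i).le) (self_mem_range_succ n)).trans (hδsum (n + 1))
    refine (norm_sub_le_of_norm_le_on_ball (r := R / 2) (hanal n).differentiableOn (hC n)
      (by linarith [hδsum n]) (by linarith)).trans ?_
    have hLip : 2 * C n / (R / 2) = 4 * C n / R := by field_simp; ring
    rw [hLip]
    have := hC0 n
    exact (mul_le_mul_of_nonneg_left hv.le (by positivity)).trans (hδinc n)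
  refine ⟨δ, hδpos, ?_⟩
  rintro x ⟨m, w, hw, rfl⟩
  obtain ⟨y, hy, hyw⟩ := exists_lift_sum hj hcomp w
  have hyR : ‖y‖ ≤ R / 4 := hyw.trans <| (sum_le_sum fun i _ => (hw i).le).trans <|
    (Fin.sum_univ_eq_sum_range δ m).trans_le (hδsum m)
  refine ⟨⟨m, y, by linarith, hy.symm⟩, ?_⟩
  calc ‖f (∑ i : Fin m, u i (w i))‖ ≤ ∑ i ∈ range m, ε / 2 / 2 ^ (i + 1) :=
        norm_apply_sum_le hj hcomp hf0 hinc w hw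
    _ ≤ ε / 2 := sum_range_div_two_pow_succ_le (by positivity) m
    _ < ε := half_lt_self hε

/-- Continuity core of Theorem A.  Let `E` be a complex vector space which is the union of
an increasing sequence of normed spaces `X n` (realized by injective linear maps
`u n : X n → E` compatible with bonding maps `j n` of operator norm at most `1`), let
`U := ⋃ₙ uₙ(B_R(0))`, and let `f : U → F` (into a Banach space) with `f 0 = 0` restrict to
a bounded complex analytic map on each ball `B_R(0) ⊆ X n`.  Then for every `ε > 0` there
is a sequence `δ` of positive reals such that the basic `0`-neighborhood
`V(δ₁, δ₂, …) = ⋃ₘ (B_{δ₁} + ⋯ + B_{δₘ})` is contained in `U` and mapped by `f`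
into the `ε`-ball of `F`. -/
theorem stmt15 {F : Type*} [NormedAddCommGroup F] [NormedSpace ℂ F] [CompleteSpace F]
    {E : Type*} [AddCommGroup E] [Module ℂ E]
    (X : ℕ → Type*) [∀ n, NormedAddCommGroup (X n)] [∀ n, NormedSpace ℂ (X n)]
    (u : ∀ n, X n →ₗ[ℂ] E) (huinj : ∀ n, Function.Injective (u n))
    (j : ∀ n, X n →ₗ[ℂ] X (n + 1)) (hj : ∀ n (x : X n), ‖j n x‖ ≤ ‖x‖)
    (hcomp : ∀ n (x : X n), u (n + 1) (j n x) = u n x)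
    (hunion : ∀ x : E, ∃ n, x ∈ Set.range (u n))
    (R : ℝ) (hR : 0 < R)
    (f : E → F) (hf0 : f 0 = 0)
    (hanal : ∀ n, AnalyticOnNhd ℂ (fun y : X n => f (u n y)) (ball 0 R))
    (hbdd : ∀ n, ∃ C, ∀ y ∈ ball (0 : X n) R, ‖f (u n y)‖ ≤ C)
    (ε : ℝ) (hε : 0 < ε) :
    ∃ δ : ℕ → ℝ, (∀ i, 0 < δ i) ∧
      ∀ x : E,
        (∃ (m : ℕ) (w : (i : Fin m) → X i.val),
            (∀ i, ‖w i‖ < δ i.val) ∧ x = ∑ i, u i.val (w i)) →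
        (∃ n, ∃ y : X n, ‖y‖ < R ∧ x = u n y) ∧ ‖f x‖ < ε :=
  stmt15_general X u j hj hcomp R hR f hf0 hanal hbdd ε hε
end

section
/- Let E = ⋃_{n∈ℕ} E_n be a Hausdorff locally convex direct limit of an increasing sequence of complex normed spaces with contractive inclusions, F a locally convex complex space, R > 0, U := ⋃_n B_R^{E_n}(0). If f : U → F restricts to a bounded complex analytic map on each B_R^{E_n}(0), then f is complex analytic on U (continuous and locally given by convergent power series). -/
/-!
Continuity at `a = uₙ x₀` is tested against a continuous seminorm `p` of `F`. On each step
`Xₙ`, Hahn–Banach and the Schwarz lemma applied to `z ↦ Λ (f (y + z h))` turn the bound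
`p ∘ f ≤ Mₙ` on `B_R(0)` into the Lipschitz estimate `p (f (y + h) - f y) ≤ 2 Mₙ ‖h‖ / (R - ‖y‖)`.
A point `a + ∑_{i<m} uᵢ wᵢ` of the basic neighbourhood `a + V(δ₀, δ₁, …)` is reached from `a` by
adding the `wᵢ` one at a time inside `X_{n+m}`, so choosing `δᵢ` geometrically small relative to
the Lipschitz constants makes the accumulated increments of `p ∘ f` small.
-/

open Metric Finset Filter Topology

open scoped ComplexOrder in
theorem PolynormableSpace.of_locallyConvexSpace_real {𝕜 E : Type*} [RCLike 𝕜] [AddCommGroup E]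
    [Module ℝ E] [Module 𝕜 E] [IsScalarTower ℝ 𝕜 E] [TopologicalSpace E]
    [IsTopologicalAddGroup E] [ContinuousSMul 𝕜 E] [LocallyConvexSpace ℝ E] :
    PolynormableSpace 𝕜 E := by
  have : ContinuousSMul ℝ E := IsScalarTower.continuousSMul 𝕜
  have : LocallyConvexSpace 𝕜 E := by
    refine (locallyConvexSpace_iff_exists_convex_subset_zero 𝕜 E).2 fun U hU => ?_
    obtain ⟨S, hS, hSconv, hSU⟩ := (locallyConvexSpace_iff_exists_convex_subset_zero ℝ E).1 ‹_› U hU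
    exact ⟨S, hS, convex_of_nonneg_surjective_algebraMap _
      (fun _ => RCLike.nonneg_iff_exists_ofReal.mp) hSconv, hSU⟩
  infer_instance

theorem Seminorm.exists_strongDual_norm_le_eq {𝕜 E : Type*} [RCLike 𝕜] [AddCommGroup E]
    [Module 𝕜 E] [TopologicalSpace E] [PolynormableSpace 𝕜 E] {p : Seminorm 𝕜 E}
    (hp : Continuous p) (v : E) :
    ∃ g : StrongDual 𝕜 E, (∀ x, ‖g x‖ ≤ p x) ∧ g v = p v := by
  rcases eq_or_ne v 0 with rfl | hv
  · exact ⟨0, fun x => by simp, by simp⟩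
  let f : Module.Dual 𝕜 (𝕜 ∙ v) := (p v : 𝕜) • (LinearEquiv.coord 𝕜 E v hv).toLinearMap
  have hf : ∀ x, ‖f x‖ ≤ p x := fun x => le_of_eq <| calc
    ‖f x‖ = ‖LinearEquiv.coord 𝕜 E v hv x‖ * p v := by
      simp [f, norm_smul, abs_of_nonneg (apply_nonneg p v), mul_comm]
    _ = p x := by rw [← map_smul_eq_mul p, LinearEquiv.coord_apply_smul]
  obtain ⟨g, hgf, hgp⟩ := Module.Dual.exists_continuous_extension_of_le_seminorm _ f hp hf
  refine ⟨g, hgp, ?_⟩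
  have := hgf ⟨v, Submodule.mem_span_singleton_self v⟩
  simpa [f, LinearEquiv.coord_self, RCLike.real_smul_eq_coe_mul] using this

theorem hasFPowerSeriesOnBall_ofScalars_of_hasSum {𝕜 : Type*} [RCLike 𝕜] {φ : 𝕜 → 𝕜}
    {d : ℕ → 𝕜} {z₀ : 𝕜} {ε : ℝ} (hε : 0 < ε)
    (h : ∀ w : 𝕜, ‖w‖ < ε → HasSum (fun k => w ^ k • d k) (φ (z₀ + w))) :
    HasFPowerSeriesOnBall φ (FormalMultilinearSeries.ofScalars 𝕜 d) z₀ (ENNReal.ofReal ε) where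
  r_le := by
    refine ENNReal.le_of_forall_nnreal_lt fun r hr => ?_
    have hrε : (r : ℝ) < ε := by
      simpa [ENNReal.toReal_ofReal hε.le] using (ENNReal.toReal_lt_toReal (by simp) (by simp)).2 hr
    refine FormalMultilinearSeries.le_radius_of_tendsto _ (l := 0) ?_
    have := (h ((r : ℝ) : 𝕜) (by simpa using hrε)).summable.tendsto_atTop_zero.norm
    simpa [norm_smul, FormalMultilinearSeries.ofScalars_norm, mul_comm] using this
  r_pos := by simpa using hε
  hasSum {w} hw := by
    have hw' : ‖w‖ < ε := by simpa [ENNReal.lt_ofReal_iff_toReal_lt] using hw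
    simpa [FormalMultilinearSeries.ofScalars_apply_eq, mul_comm] using h w hw'

def GateauxAnalyticOn {V F : Type*} [AddCommGroup V] [Module ℂ V] [AddCommGroup F] [Module ℂ F]
    [TopologicalSpace F] (g : V → F) (s : Set V) : Prop :=
  ∀ a ∈ s, ∀ b : V, ∃ ε > (0 : ℝ), ∃ c : ℕ → F,
    ∀ z : ℂ, ‖z‖ < ε → HasSum (fun k : ℕ => z ^ k • c k) (g (a + z • b))

namespace GateauxAnalyticOn

variable {V F : Type*} [AddCommGroup V] [Module ℂ V] [AddCommGroup F] [Module ℂ F]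
  [TopologicalSpace F] {g : V → F} {s : Set V}

theorem differentiableAt_comp_line (hg : GateauxAnalyticOn g s) (Λ : StrongDual ℂ F)
    {y h : V} {z₀ : ℂ} (hz₀ : y + z₀ • h ∈ s) :
    DifferentiableAt ℂ (fun z : ℂ => Λ (g (y + z • h))) z₀ := by
  obtain ⟨ε, hε, c, hc⟩ := hg _ hz₀ h
  have hline : ∀ w : ℂ, ‖w‖ < ε →
      HasSum (fun k => w ^ k • Λ (c k)) (Λ (g (y + (z₀ + w) • h))) := fun w hw => by
    simpa [Function.comp_def, add_smul, add_assoc] using (hc w hw).map Λ Λ.continuous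
  exact (hasFPowerSeriesOnBall_ofScalars_of_hasSum hε hline).hasFPowerSeriesAt.differentiableAt

theorem seminorm_sub_le {X : Type*} [NormedAddCommGroup X] [NormedSpace ℂ X]
    [PolynormableSpace ℂ F] {g : X → F} {R M : ℝ} (hg : GateauxAnalyticOn g (ball 0 R))
    {p : Seminorm ℂ F} (hp : Continuous p) (hM : ∀ x ∈ ball 0 R, p (g x) ≤ M) {y h : X}
    (hyh : ‖y‖ + ‖h‖ < R) :
    p (g (y + h) - g y) ≤ 2 * M / (R - ‖y‖) * ‖h‖ := by
  rcases eq_or_ne h 0 with rfl | hne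
  · simp
  have hh : 0 < ‖h‖ := norm_pos_iff.2 hne
  set ρ := (R - ‖y‖) / ‖h‖
  have hρ : 1 < ρ := (one_lt_div hh).2 (by linarith)
  have hmem : ∀ z ∈ ball (0 : ℂ) ρ, y + z • h ∈ ball 0 R := fun z hz => by
    rw [mem_ball_zero_iff] at hz ⊢
    calc ‖y + z • h‖ ≤ ‖y‖ + ‖z‖ * ‖h‖ := (norm_add_le _ _).trans_eq (by rw [norm_smul])
      _ < ‖y‖ + ρ * ‖h‖ := by gcongr
      _ = R := by rw [div_mul_cancel₀ _ hh.ne']; ring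
  obtain ⟨Λ, hΛp, hΛv⟩ := Seminorm.exists_strongDual_norm_le_eq hp (g (y + h) - g y)
  set φ := fun z : ℂ => Λ (g (y + z • h))
  have hφ : DifferentiableOn ℂ φ (ball 0 ρ) := fun z hz =>
    (hg.differentiableAt_comp_line Λ (hmem z hz)).differentiableWithinAt
  have hφM : ∀ z ∈ ball (0 : ℂ) ρ, ‖φ z‖ ≤ M := fun z hz => (hΛp _).trans (hM _ (hmem z hz))
  have h0 : (0 : ℂ) ∈ ball 0 ρ := mem_ball_self (by linarith)
  have h1 : (1 : ℂ) ∈ ball 0 ρ := by simpa using hρ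
  have hmaps : Set.MapsTo φ (ball 0 ρ) (closedBall (φ 0) (2 * M)) := fun z hz => by
    rw [mem_closedBall, dist_eq_norm, two_mul]
    exact (norm_sub_le _ _).trans (add_le_add (hφM z hz) (hφM 0 h0))
  calc
    p (g (y + h) - g y) = ‖φ 1 - φ 0‖ := by
      simp only [φ, one_smul, zero_smul, add_zero]
      rw [← map_sub, hΛv, RCLike.norm_ofReal, abs_of_nonneg (apply_nonneg _ _)]
    _ ≤ 2 * M / ρ * dist (1 : ℂ) 0 := by
      rw [← dist_eq_norm]; exact Complex.dist_le_div_mul_dist_of_mapsTo_ball hφ hmaps h1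
    _ = 2 * M / (R - ‖y‖) * ‖h‖ := by
      rw [dist_zero_right, norm_one, mul_one, div_div_eq_mul_div, mul_div_right_comm]

end GateauxAnalyticOn

section DirectLimit

variable {E F : Type*} [AddCommGroup E] [Module ℂ E] [AddCommGroup F] [Module ℂ F]
  {X : ℕ → Type*} [∀ n, SeminormedAddCommGroup (X n)] [∀ n, Module ℂ (X n)]
  {u : ∀ n, X n →ₗ[ℂ] E} {j : ∀ n, X n →ₗ[ℂ] X (n + 1)}

theorem exists_norm_le_and_eq_of_le (hj : ∀ n (x : X n), ‖j n x‖ ≤ ‖x‖)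
    (hcomp : ∀ n (x : X n), u (n + 1) (j n x) = u n x) {m N : ℕ} (hmN : m ≤ N) (x : X m) :
    ∃ x' : X N, ‖x'‖ ≤ ‖x‖ ∧ u N x' = u m x := by
  induction N, hmN using Nat.le_induction with
  | base => exact ⟨x, le_rfl, rfl⟩
  | succ N _ ih =>
    obtain ⟨x', hx'x, hx'u⟩ := ih
    exact ⟨j N x', (hj N x').trans hx'x, (hcomp N x').trans hx'u⟩

theorem exists_eq_add_sum_of_norm_lt (hj : ∀ n (x : X n), ‖j n x‖ ≤ ‖x‖)
    (hcomp : ∀ n (x : X n), u (n + 1) (j n x) = u n x) {g : E → F} {p : Seminorm ℂ F}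
    {L : ℕ → ℝ} (hL0 : ∀ N, 0 ≤ L N) {s : ℝ}
    (hL : ∀ N (y h : X N), ‖y‖ + ‖h‖ ≤ s → p (g (u N (y + h)) - g (u N y)) ≤ L N * ‖h‖)
    {n : ℕ} (x₀ : X n) {δ : ℕ → ℝ} (hδ : ∀ m, ‖x₀‖ + ∑ i ∈ range m, δ i ≤ s) :
    ∀ (m : ℕ) (w : (i : Fin m) → X i.val), (∀ i, ‖w i‖ < δ i.val) →
      ∃ y : X (n + m), ‖y‖ ≤ ‖x₀‖ + ∑ i ∈ range m, δ i ∧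
        u _ y = u n x₀ + ∑ i, u i.val (w i) ∧
        p (g (u _ y) - g (u n x₀)) ≤ ∑ i ∈ range m, L (n + (i + 1)) * δ i := by
  intro m
  induction m with
  | zero => exact fun _ _ => ⟨x₀, by simp, by simp, by simp⟩
  | succ m ih =>
    intro w hw
    obtain ⟨y, hy, hyu, hyp⟩ := ih (fun i => w i.castSucc) fun i => hw i.castSucc
    obtain ⟨h, hhw, hhu⟩ := exists_norm_le_and_eq_of_le hj hcomp
      (m.le_succ.trans (Nat.le_add_left _ n)) (w (Fin.last m))
    have hhδ : ‖h‖ ≤ δ m := hhw.trans (hw (Fin.last m)).le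
    have hyh : ‖j _ y‖ + ‖h‖ ≤ ‖x₀‖ + ∑ i ∈ range (m + 1), δ i := by
      rw [sum_range_succ]; linarith [hj _ y]
    have hstep : p (g (u _ (j _ y + h)) - g (u _ (j _ y))) ≤ L (n + (m + 1)) * δ m :=
      (hL _ _ h (hyh.trans (hδ _))).trans (mul_le_mul_of_nonneg_left hhδ (hL0 _))
    have hju : u (n + (m + 1)) (j (n + m) y) = u (n + m) y := hcomp _ y
    refine ⟨j _ y + h, (norm_add_le _ _).trans hyh, ?_, ?_⟩
    · rw [map_add, hju, hhu, hyu, Fin.sum_univ_castSucc]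
      simp only [Fin.val_castSucc, Fin.val_last, add_assoc]
    · calc p (g (u _ (j _ y + h)) - g (u n x₀))
          ≤ p (g (u _ (j _ y + h)) - g (u _ (j _ y))) + p (g (u _ y) - g (u n x₀)) :=
            (map_add_le_add p _ _).trans_eq' (by rw [hcomp, sub_add_sub_cancel])
        _ ≤ L (n + (m + 1)) * δ m + ∑ i ∈ range m, L (n + (i + 1)) * δ i := add_le_add hstep hyp
        _ = ∑ i ∈ range (m + 1), L (n + (i + 1)) * δ i := by rw [sum_range_succ, add_comm]

theorem eventually_seminorm_sub_lt [TopologicalSpace E] [IsTopologicalAddGroup E]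
    (hj : ∀ n (x : X n), ‖j n x‖ ≤ ‖x‖) (hcomp : ∀ n (x : X n), u (n + 1) (j n x) = u n x)
    (hnhds : ∀ δ : ℕ → ℝ, (∀ i, 0 < δ i) →
      {x : E | ∃ (m : ℕ) (w : (i : Fin m) → X i.val),
          (∀ i, ‖w i‖ < δ i.val) ∧ x = ∑ i, u i.val (w i)} ∈ 𝓝 (0 : E))
    {g : E → F} {p : Seminorm ℂ F} {L : ℕ → ℝ} (hL0 : ∀ N, 0 ≤ L N) {s : ℝ}
    (hL : ∀ N (y h : X N), ‖y‖ + ‖h‖ ≤ s → p (g (u N (y + h)) - g (u N y)) ≤ L N * ‖h‖)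
    {n : ℕ} (x₀ : X n) (hx₀ : ‖x₀‖ < s) {ε : ℝ} (hε : 0 < ε) :
    ∀ᶠ x in 𝓝 (u n x₀), p (g x - g (u n x₀)) < ε := by
  set η := min (s - ‖x₀‖) ε
  have hη : 0 < η := lt_min (by linarith) hε
  set δ : ℕ → ℝ := fun i => η / 4 * (1 / 2) ^ i / (L (n + (i + 1)) + 1)
  have hLδ : ∀ i, L (n + (i + 1)) * δ i ≤ η / 4 * (1 / 2) ^ i := fun i => by
    have := hL0 (n + (i + 1))
    rw [mul_div_assoc', div_le_iff₀ (by linarith)]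
    nlinarith [show 0 < η / 4 * (1 / 2 : ℝ) ^ i by positivity]
  have hδ : ∀ i, δ i ≤ η / 4 * (1 / 2) ^ i := fun i =>
    div_le_self (by positivity) (by linarith [hL0 (n + (i + 1))])
  have hgeom : ∀ (a : ℕ → ℝ) (m : ℕ), (∀ i, a i ≤ η / 4 * (1 / 2) ^ i) →
      ∑ i ∈ range m, a i ≤ η / 2 := fun a m ha => calc
    ∑ i ∈ range m, a i ≤ η / 4 * ∑ i ∈ range m, (1 / 2 : ℝ) ^ i := by
      rw [mul_sum]; exact sum_le_sum fun i _ => ha i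
    _ ≤ η / 4 * 2 := by gcongr; exact sum_geometric_two_le m
    _ = η / 2 := by ring
  have hsum : ∀ m, ‖x₀‖ + ∑ i ∈ range m, δ i ≤ s := fun m => by
    linarith [hgeom δ m hδ, min_le_left (s - ‖x₀‖) ε]
  rw [← map_add_left_nhds_zero, eventually_map]
  filter_upwards [hnhds δ fun i => div_pos (by positivity) (by linarith [hL0 (n + (i + 1))])]
    with _ ⟨m, w, hw, hx⟩
  subst hx
  obtain ⟨y, -, hyu, hyp⟩ := exists_eq_add_sum_of_norm_lt hj hcomp hL0 hL x₀ hsum m w hw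
  rw [← hyu]
  linarith [hgeom _ m hLδ, min_le_right (s - ‖x₀‖) ε]

theorem gateauxAnalyticOn_iUnion_image [TopologicalSpace F]
    (hj : ∀ n (x : X n), ‖j n x‖ ≤ ‖x‖) (hcomp : ∀ n (x : X n), u (n + 1) (j n x) = u n x)
    (hunion : ∀ x : E, ∃ n, x ∈ Set.range (u n)) {f : E → F} {R : ℝ}
    (hf : ∀ n, GateauxAnalyticOn (fun y : X n => f (u n y)) (ball 0 R)) :
    GateauxAnalyticOn f (⋃ n, u n '' ball 0 R) := by
  rintro _ ⟨_, ⟨n, rfl⟩, x, hx, rfl⟩ b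
  obtain ⟨m, b, rfl⟩ := hunion b
  obtain ⟨x', hx'x, hx'u⟩ := exists_norm_le_and_eq_of_le hj hcomp (le_max_left n m) x
  obtain ⟨b', -, hb'u⟩ := exists_norm_le_and_eq_of_le hj hcomp (le_max_right n m) b
  have hx' : x' ∈ ball 0 R := mem_ball_zero_iff.2 (hx'x.trans_lt (mem_ball_zero_iff.1 hx))
  simpa [hx'u, hb'u] using hf _ x' hx' b'

end DirectLimit

theorem stmt16_general {E : Type*} [AddCommGroup E] [Module ℂ E] [TopologicalSpace E]
    [IsTopologicalAddGroup E]
    {F : Type*} [AddCommGroup F] [Module ℝ F] [Module ℂ F] [IsScalarTower ℝ ℂ F]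
    [TopologicalSpace F] [IsTopologicalAddGroup F] [ContinuousSMul ℂ F]
    [LocallyConvexSpace ℝ F]
    (X : ℕ → Type*) [∀ n, NormedAddCommGroup (X n)] [∀ n, NormedSpace ℂ (X n)]
    (u : ∀ n, X n →ₗ[ℂ] E)
    (j : ∀ n, X n →ₗ[ℂ] X (n + 1)) (hj : ∀ n (x : X n), ‖j n x‖ ≤ ‖x‖)
    (hcomp : ∀ n (x : X n), u (n + 1) (j n x) = u n x)
    (hunion : ∀ x : E, ∃ n, x ∈ Set.range (u n))
    (hnhds : ∀ δ : ℕ → ℝ, (∀ i, 0 < δ i) →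
      {x : E | ∃ (m : ℕ) (w : (i : Fin m) → X i.val),
          (∀ i, ‖w i‖ < δ i.val) ∧ x = ∑ i, u i.val (w i)} ∈ nhds (0 : E))
    (R : ℝ) (f : E → F)
    (hgat : ∀ n, ∀ a ∈ ball (0 : X n) R, ∀ b : X n, ∃ ε > (0 : ℝ), ∃ c : ℕ → F,
      ∀ z : ℂ, ‖z‖ < ε → HasSum (fun k : ℕ => z ^ k • c k) (f (u n (a + z • b))))
    (hbdd : ∀ n, Bornology.IsVonNBounded ℂ ((fun y : X n => f (u n y)) '' ball 0 R)) :
    ContinuousOn f (⋃ n, (fun y : X n => u n y) '' ball 0 R) ∧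
      ∀ a ∈ ⋃ n, (fun y : X n => u n y) '' ball 0 R, ∀ b : E,
        ∃ ε > (0 : ℝ), ∃ c : ℕ → F,
          ∀ z : ℂ, ‖z‖ < ε → HasSum (fun k : ℕ => z ^ k • c k) (f (a + z • b)) := by
  have hgat : ∀ n, GateauxAnalyticOn (fun y : X n => f (u n y)) (ball 0 R) := hgat
  have : PolynormableSpace ℂ F := .of_locallyConvexSpace_real
  have hF := PolynormableSpace.withSeminorms ℂ F
  refine ⟨?_, gateauxAnalyticOn_iUnion_image hj hcomp hunion hgat⟩
  rintro _ ⟨_, ⟨n, rfl⟩, x₀, hx₀, rfl⟩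
  refine ContinuousAt.continuousWithinAt ?_
  rw [ContinuousAt, hF.tendsto_nhds]
  rintro ⟨p, hp⟩ ε hε
  choose M hM0 hM using fun N =>
    (hF.image_isVonNBounded_iff_seminorm_bounded _).1 (hbdd N) ⟨p, hp⟩
  have hx₀R : ‖x₀‖ < R := mem_ball_zero_iff.1 hx₀
  set s := (‖x₀‖ + R) / 2 with hs
  refine eventually_seminorm_sub_lt hj hcomp hnhds (s := s) (L := fun N => 2 * M N / (R - s))
    (fun N => div_nonneg (by linarith [hM0 N]) (by linarith)) (fun N y h hyh => ?_) x₀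
    (by linarith) hε
  calc p (f (u N (y + h)) - f (u N y)) ≤ 2 * M N / (R - ‖y‖) * ‖h‖ :=
        (hgat N).seminorm_sub_le hp (fun x hx => (hM N x hx).le) (by linarith)
    _ ≤ 2 * M N / (R - s) * ‖h‖ := by
        gcongr <;> linarith [hM0 N, norm_nonneg h]

/-- Theorem A.  Let `E` be a complex vector space which is the Hausdorff locally convex
direct limit of an increasing sequence of normed spaces `X n` (realized by injective
continuous linear maps `u n : X n → E` compatible with bonding maps of operator norm at
most `1`; the direct limit topology is encoded by requiring every basic set
`V(δ₁, δ₂, …)` to be a `0`-neighborhood).  Let `F` be a locally convex complex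
topological vector space, `R > 0` and `U := ⋃ₙ uₙ(B_R(0))`.  If `f : U → F` restricts to
a bounded complex analytic map (i.e. continuous and Gateaux analytic, with von
Neumann-bounded image) on each ball `B_R(0) ⊆ X n`, then `f` is complex analytic on `U`:
it is continuous on `U` and Gateaux analytic, i.e. admits convergent power series
expansions along all complex lines through points of `U`. -/
theorem stmt16 {E : Type*} [AddCommGroup E] [Module ℂ E] [TopologicalSpace E]
    [IsTopologicalAddGroup E] [ContinuousSMul ℂ E] [T2Space E]
    {F : Type*} [AddCommGroup F] [Module ℝ F] [Module ℂ F] [IsScalarTower ℝ ℂ F]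
    [TopologicalSpace F] [IsTopologicalAddGroup F] [ContinuousSMul ℂ F]
    [LocallyConvexSpace ℝ F]
    (X : ℕ → Type*) [∀ n, NormedAddCommGroup (X n)] [∀ n, NormedSpace ℂ (X n)]
    (u : ∀ n, X n →ₗ[ℂ] E) (huinj : ∀ n, Function.Injective (u n))
    (hucont : ∀ n, Continuous fun y : X n => u n y)
    (j : ∀ n, X n →ₗ[ℂ] X (n + 1)) (hj : ∀ n (x : X n), ‖j n x‖ ≤ ‖x‖)
    (hcomp : ∀ n (x : X n), u (n + 1) (j n x) = u n x)
    (hunion : ∀ x : E, ∃ n, x ∈ Set.range (u n))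
    (hnhds : ∀ δ : ℕ → ℝ, (∀ i, 0 < δ i) →
      {x : E | ∃ (m : ℕ) (w : (i : Fin m) → X i.val),
          (∀ i, ‖w i‖ < δ i.val) ∧ x = ∑ i, u i.val (w i)} ∈ nhds (0 : E))
    (R : ℝ) (hR : 0 < R) (f : E → F)
    (hcontn : ∀ n, ContinuousOn (fun y : X n => f (u n y)) (ball 0 R))
    (hgat : ∀ n, ∀ a ∈ ball (0 : X n) R, ∀ b : X n, ∃ ε > (0 : ℝ), ∃ c : ℕ → F,
      ∀ z : ℂ, ‖z‖ < ε → HasSum (fun k : ℕ => z ^ k • c k) (f (u n (a + z • b))))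
    (hbdd : ∀ n, Bornology.IsVonNBounded ℂ ((fun y : X n => f (u n y)) '' ball 0 R)) :
    ContinuousOn f (⋃ n, (fun y : X n => u n y) '' ball 0 R) ∧
      ∀ a ∈ ⋃ n, (fun y : X n => u n y) '' ball 0 R, ∀ b : E,
        ∃ ε > (0 : ℝ), ∃ c : ℕ → F,
          ∀ z : ℂ, ‖z‖ < ε → HasSum (fun k : ℕ => z ^ k • c k) (f (a + z • b)) :=
  stmt16_general X u j hj hcomp hunion hnhds R f hgat hbdd
end

section
/- Let E = ⋃_{n∈ℕ} E_n be a locally convex direct limit of an increasing sequence of normed spaces over 𝕂 ∈ {ℝ, ℂ} with continuous inclusions, assumed Hausdorff, and let F be a locally convex space. A polynomial map f : E → F (a finite sum of continuous-on-each-step homogeneous polynomial maps) is continuous on E if and only if each restriction f|_{E_n} : E_n → F is continuous. -/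
/-!
Along every real line `t ↦ v + t • h` a polynomial map of degree `≤ d` is an `F`-valued
polynomial in `t`, whose coefficients are fixed linear combinations of its values at
`t = 0, 1, …, d` (invert the Vandermonde matrix). Hence, for a continuous seminorm `p` of `F`,
the restriction of `f` to a step `X n` is first bounded on balls (scale into the neighbourhood
of `0` where `p ∘ f` is bounded) and then Lipschitz on balls with respect to `p`.

Let `a ∈ X N` and `ε > 0`. Choose `δ n` so small that adding `u n (w n)`, `‖w n‖ < δ n`, to a
point of a fixed ball of `X (n + N)` changes `f` by at most `ε / 2 ^ (n + 2)` in `p`. Every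
`x` of the basic neighbourhood `a + V(δ)` is reached from `a` by finitely many such steps,
so `p (f x - f a) < ε`.
-/

section PolynomialCurves

variable {F : Type*} [AddCommGroup F] [Module ℝ F]

def IsPolynomialOfDegreeLE (d : ℕ) (φ : ℝ → F) : Prop :=
  ∃ a : Fin (d + 1) → F, ∀ t, φ t = ∑ j : Fin (d + 1), t ^ (j : ℕ) • a j

lemma isPolynomialOfDegreeLE_monomial {d k : ℕ} (hk : k ≤ d) (b : F) :
    IsPolynomialOfDegreeLE d fun t => t ^ k • b := by
  classical
  refine ⟨Pi.single ⟨k, Nat.lt_succ_of_le hk⟩ b, fun t => ?_⟩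
  rw [Fintype.sum_eq_single ⟨k, Nat.lt_succ_of_le hk⟩ fun j hj => by simp [hj]]
  simp

lemma IsPolynomialOfDegreeLE.sum {d : ℕ} {ι : Type*} (s : Finset ι) {φ : ι → ℝ → F}
    (h : ∀ i, IsPolynomialOfDegreeLE d (φ i)) :
    IsPolynomialOfDegreeLE d fun t => ∑ i ∈ s, φ i t := by
  choose a ha using h
  refine ⟨fun j => ∑ i ∈ s, a i j, fun t => ?_⟩
  simp only [ha, Finset.smul_sum]
  exact Finset.sum_comm

lemma abs_pow_sub_zero_pow_le (t : ℝ) {j d : ℕ} (hj : j ≤ d) :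
    |t ^ j - 0 ^ j| ≤ |t| * (1 + |t|) ^ d := by
  have ht : 0 ≤ |t| := abs_nonneg t
  cases j with
  | zero => simp only [pow_zero, sub_self, abs_zero]; positivity
  | succ j =>
    rw [zero_pow j.succ_ne_zero, sub_zero, abs_pow, pow_succ']
    gcongr
    calc |t| ^ j ≤ (1 + |t|) ^ j := by gcongr; linarith
      _ ≤ (1 + |t|) ^ d := pow_le_pow_right₀ (by linarith) (by omega)

lemma IsPolynomialOfDegreeLE.exists_sum_seminorm_coeff_le (d : ℕ) :
    ∃ C : ℝ, 0 ≤ C ∧ ∀ (p : Seminorm ℝ F) (a : Fin (d + 1) → F) (B : ℝ),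
      (∀ i : Fin (d + 1), p (∑ j : Fin (d + 1), ((i : ℕ) : ℝ) ^ (j : ℕ) • a j) ≤ B) →
        ∑ j, p (a j) ≤ C * B := by
  set V := Matrix.vandermonde fun i : Fin (d + 1) => ((i : ℕ) : ℝ)
  have hV : IsUnit V.det := by
    rw [isUnit_iff_ne_zero, Ne, Matrix.det_vandermonde_eq_zero_iff]
    rintro ⟨i, j, hij, hne⟩
    exact hne (Fin.ext (Nat.cast_injective hij))
  refine ⟨∑ j, ∑ i, |V⁻¹ j i|, by positivity, fun p a B ha => ?_⟩
  have hinv : ∀ j, a j = ∑ i, V⁻¹ j i • ∑ k : Fin (d + 1), ((i : ℕ) : ℝ) ^ (k : ℕ) • a k := by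
    intro j
    simp only [Finset.smul_sum, smul_smul]
    rw [Finset.sum_comm]
    simp only [← Finset.sum_smul]
    have hVV : ∀ k : Fin (d + 1), ∑ i, V⁻¹ j i * ((i : ℕ) : ℝ) ^ (k : ℕ) = (V⁻¹ * V) j k :=
      fun k => rfl
    simp [hVV, Matrix.nonsing_inv_mul V hV, Matrix.one_apply]
  rw [Finset.sum_mul]
  refine Finset.sum_le_sum fun j _ => ?_
  calc p (a j) ≤ ∑ i, p (V⁻¹ j i • ∑ k : Fin (d + 1), ((i : ℕ) : ℝ) ^ (k : ℕ) • a k) := by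
        rw [hinv j]; exact Finset.le_sum_of_subadditive _ (map_zero p).le (map_add_le_add p) _ _
    _ ≤ ∑ i, |V⁻¹ j i| * B := by
        refine Finset.sum_le_sum fun i _ => ?_
        rw [map_smul_eq_mul, Real.norm_eq_abs]
        exact mul_le_mul_of_nonneg_left (ha i) (abs_nonneg _)
    _ = (∑ i, |V⁻¹ j i|) * B := (Finset.sum_mul ..).symm

lemma IsPolynomialOfDegreeLE.exists_seminorm_sub_le (d : ℕ) :
    ∃ C : ℝ, 0 ≤ C ∧ ∀ (p : Seminorm ℝ F) (φ : ℝ → F) (B : ℝ), IsPolynomialOfDegreeLE d φ →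
      (∀ i : Fin (d + 1), p (φ i) ≤ B) → ∀ t, p (φ t - φ 0) ≤ C * B * (|t| * (1 + |t|) ^ d) := by
  obtain ⟨C, hC0, hC⟩ := IsPolynomialOfDegreeLE.exists_sum_seminorm_coeff_le (F := F) d
  refine ⟨C, hC0, fun p φ B ⟨a, ha⟩ hB t => ?_⟩
  have hcoeff := hC p a B fun i => ha _ ▸ hB i
  calc p (φ t - φ 0) = p (∑ j : Fin (d + 1), (t ^ (j : ℕ) - 0 ^ (j : ℕ)) • a j) := by
        simp only [ha, sub_smul, Finset.sum_sub_distrib]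
    _ ≤ ∑ j : Fin (d + 1), |t ^ (j : ℕ) - 0 ^ (j : ℕ)| * p (a j) := by
        refine (Finset.le_sum_of_subadditive _ (map_zero p).le (map_add_le_add p) _ _).trans ?_
        simp only [map_smul_eq_mul, Real.norm_eq_abs, le_refl]
    _ ≤ ∑ j : Fin (d + 1), |t| * (1 + |t|) ^ d * p (a j) := by
        gcongr with j
        exact abs_pow_sub_zero_pow_le t (Nat.lt_succ_iff.mp j.isLt)
    _ ≤ C * B * (|t| * (1 + |t|) ^ d) := by
        rw [← Finset.mul_sum, mul_comm]
        gcongr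

end PolynomialCurves

section PolynomialMaps

variable (𝕜 : Type*) [RCLike 𝕜] {M F : Type*} [AddCommGroup M] [Module 𝕜 M]
  [AddCommGroup F] [Module ℝ F]

-- Real lines suffice also for `𝕜 = ℂ`, and keep all estimates over `ℝ`-seminorms.
def IsPolynomialOnLines (d : ℕ) (P : M → F) : Prop :=
  ∀ v h : M, IsPolynomialOfDegreeLE d fun t : ℝ => P (v + (t : 𝕜) • h)

variable {𝕜}

lemma IsPolynomialOnLines.comp_linearMap {d : ℕ} {P : M → F} (hP : IsPolynomialOnLines 𝕜 d P)
    {M' : Type*} [AddCommGroup M'] [Module 𝕜 M'] (g : M' →ₗ[𝕜] M) :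
    IsPolynomialOnLines 𝕜 d (P ∘ g) := fun v h => by
  simpa only [Function.comp_apply, map_add, map_smul] using hP (g v) (g h)

lemma MultilinearMap.isPolynomialOfDegreeLE_line [Module 𝕜 F] [IsScalarTower ℝ 𝕜 F] {k d : ℕ}
    (hk : k ≤ d) (β : MultilinearMap 𝕜 (fun _ : Fin k => M) F) (v h : M) :
    IsPolynomialOfDegreeLE d fun t : ℝ => β fun _ => v + (t : 𝕜) • h := by
  classical
  have expand : ∀ t : ℝ, (β fun _ => v + (t : 𝕜) • h) =
      ∑ S : Finset (Fin k), t ^ S.card • β (S.piecewise (fun _ => h) (fun _ => v)) := by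
    intro t
    rw [show (fun _ : Fin k => v + (t : 𝕜) • h) = (fun _ => (t : 𝕜) • h) + fun _ => v from
      funext fun _ => add_comm _ _, β.map_add_univ]
    refine Finset.sum_congr rfl fun S _ => ?_
    have hS : S.piecewise (fun _ => (t : 𝕜) • h) (fun _ => v) = S.piecewise
        (fun i => (t : 𝕜) • S.piecewise (fun _ => h) (fun _ => v) i)
        (S.piecewise (fun _ => h) (fun _ => v)) := by
      ext i
      by_cases hi : i ∈ S <;> simp [hi]
    rw [hS, β.map_piecewise_smul, Finset.prod_const, ← RCLike.ofReal_pow,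
      ← RCLike.real_smul_eq_coe_smul]
  simp_rw [expand]
  exact IsPolynomialOfDegreeLE.sum _ fun S => isPolynomialOfDegreeLE_monomial
    ((S.card_le_univ.trans_eq (Fintype.card_fin k)).trans hk) _

lemma isPolynomialOnLines_sum_multilinearMap [Module 𝕜 F] [IsScalarTower ℝ 𝕜 F] {d : ℕ}
    (β : (k : Fin (d + 1)) → MultilinearMap 𝕜 (fun _ : Fin k => M) F) :
    IsPolynomialOnLines 𝕜 d fun x => ∑ k, β k fun _ => x := fun v h =>
  IsPolynomialOfDegreeLE.sum _ fun k =>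
    (β k).isPolynomialOfDegreeLE_line (Nat.lt_succ_iff.mp k.isLt) v h

end PolynomialMaps

section NormedSpace

variable {𝕜 X F : Type*} [RCLike 𝕜] [NormedAddCommGroup X] [NormedSpace 𝕜 X]
  [AddCommGroup F] [Module ℝ F] [TopologicalSpace F] {p : Seminorm ℝ F} {P : X → F} {d : ℕ}

lemma IsPolynomialOnLines.exists_seminorm_le_of_norm_le (hP : IsPolynomialOnLines 𝕜 d P)
    (hp : Continuous p) (hPc : Continuous P) (Q : ℝ) :
    ∃ B, 0 ≤ B ∧ ∀ y, ‖y‖ ≤ Q → p (P y) ≤ B := by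
  obtain ⟨C, hC0, hC⟩ := IsPolynomialOfDegreeLE.exists_seminorm_sub_le (F := F) d
  set B₀ := p (P 0) + 1
  obtain ⟨r, hr, hball⟩ := Metric.continuousAt_iff.mp (hp.comp hPc).continuousAt 1 one_pos
  set s : ℝ := (d + 1) * (|Q| + 1) / r
  have hs : 0 < s := by positivity
  refine ⟨B₀ + C * B₀ * (s * (1 + s) ^ d), by positivity, fun y hy => ?_⟩
  set z : X := ((s⁻¹ : ℝ) : 𝕜) • y
  have hnode : ∀ i : Fin (d + 1), p (P (0 + (((i : ℕ) : ℝ) : 𝕜) • z)) ≤ B₀ := by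
    intro i
    have hnorm : ‖0 + (((i : ℕ) : ℝ) : 𝕜) • z‖ < r := by
      rw [zero_add, norm_smul, norm_smul, RCLike.norm_ofReal, RCLike.norm_ofReal,
        abs_of_nonneg (Nat.cast_nonneg _), abs_of_pos (inv_pos.mpr hs)]
      have hi : ((i : ℕ) : ℝ) ≤ d := by exact_mod_cast Nat.lt_succ_iff.mp i.isLt
      have hyQ : ‖y‖ < |Q| + 1 := by linarith [le_abs_self Q]
      calc ((i : ℕ) : ℝ) * (s⁻¹ * ‖y‖) ≤ d * (s⁻¹ * (|Q| + 1)) := by gcongr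
        _ < (d + 1) * (s⁻¹ * (|Q| + 1)) := by gcongr; linarith
        _ = r := by simp only [s]; field_simp
    have := hball (by rwa [dist_zero_right])
    rw [Function.comp_apply, Function.comp_apply, Real.dist_eq, abs_sub_lt_iff] at this
    linarith
  have hsz : (s : 𝕜) • z = y := by
    rw [smul_smul, ← RCLike.ofReal_mul, mul_inv_cancel₀ hs.ne', RCLike.ofReal_one, one_smul]
  have key := hC p _ B₀ (hP 0 z) hnode s
  simp only [zero_add, RCLike.ofReal_zero, zero_smul, hsz, abs_of_pos hs] at key
  calc p (P y) = p (P 0 + (P y - P 0)) := by rw [add_sub_cancel]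
    _ ≤ p (P 0) + p (P y - P 0) := map_add_le_add p _ _
    _ ≤ B₀ + C * B₀ * (s * (1 + s) ^ d) := by gcongr; linarith

lemma IsPolynomialOnLines.exists_seminorm_sub_le_mul_norm (hP : IsPolynomialOnLines 𝕜 d P)
    (hp : Continuous p) (hPc : Continuous P) (R : ℝ) :
    ∃ L, 0 ≤ L ∧ ∀ v h : X, ‖v‖ ≤ R → ‖h‖ ≤ 1 → p (P (v + h) - P v) ≤ L * ‖h‖ := by
  obtain ⟨B, hB0, hB⟩ := hP.exists_seminorm_le_of_norm_le hp hPc (R + d)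
  obtain ⟨C, hC0, hC⟩ := IsPolynomialOfDegreeLE.exists_seminorm_sub_le (F := F) d
  refine ⟨C * B * 2 ^ d, by positivity, fun v h hv hh => ?_⟩
  set e : X := ((‖h‖⁻¹ : ℝ) : 𝕜) • h
  have he : ‖e‖ ≤ 1 := by
    rw [norm_smul, RCLike.norm_ofReal, abs_inv, abs_norm]
    exact inv_mul_le_one_of_le₀ le_rfl (norm_nonneg h)
  have hhe : ((‖h‖ : ℝ) : 𝕜) • e = h := by
    rcases eq_or_ne h 0 with rfl | h0
    · simp
    · rw [smul_smul, ← RCLike.ofReal_mul, mul_inv_cancel₀ (norm_ne_zero_iff.mpr h0),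
        RCLike.ofReal_one, one_smul]
  have hnode : ∀ i : Fin (d + 1), p (P (v + (((i : ℕ) : ℝ) : 𝕜) • e)) ≤ B := by
    intro i
    refine hB _ ((norm_add_le _ _).trans (add_le_add hv ?_))
    rw [norm_smul, RCLike.norm_ofReal, abs_of_nonneg (Nat.cast_nonneg _)]
    have hi : ((i : ℕ) : ℝ) ≤ d := by exact_mod_cast Nat.lt_succ_iff.mp i.isLt
    nlinarith [norm_nonneg e]
  have key := hC p _ B (hP v e) hnode ‖h‖
  simp only [RCLike.ofReal_zero, zero_smul, add_zero, hhe, abs_norm] at key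
  calc p (P (v + h) - P v) ≤ C * B * (‖h‖ * (1 + ‖h‖) ^ d) := key
    _ ≤ C * B * (‖h‖ * 2 ^ d) := by gcongr; linarith
    _ = C * B * 2 ^ d * ‖h‖ := by ring

end NormedSpace

lemma Seminorm.sub_lt_of_sub_succ_le {F : Type*} [AddCommGroup F] [Module ℝ F]
    (p : Seminorm ℝ F) (g : ℕ → F) {ε : ℝ} (hε : 0 < ε)
    (hg : ∀ n, p (g (n + 1) - g n) ≤ ε / 2 ^ (n + 2)) (m : ℕ) : p (g m - g 0) < ε := by
  calc p (g m - g 0) = p (∑ n ∈ Finset.range m, (g (n + 1) - g n)) := by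
        rw [Finset.sum_range_sub]
    _ ≤ ∑ n ∈ Finset.range m, p (g (n + 1) - g n) :=
        Finset.le_sum_of_subadditive _ (map_zero p).le (map_add_le_add p) _ _
    _ ≤ ∑ n ∈ Finset.range m, ε / 4 * (1 / 2) ^ n := by
        refine Finset.sum_le_sum fun n _ => (hg n).trans_eq ?_
        rw [pow_add, one_div, inv_pow]
        field_simp
        norm_num
    _ ≤ ε / 4 * 2 := by
        rw [← Finset.mul_sum]
        exact mul_le_mul_of_nonneg_left (sum_geometric_two_le m) (by positivity)
    _ < ε := by linarith

lemma exists_pos_seq_small (L c : ℕ → ℝ) (hL : ∀ n, 0 ≤ L n) (hc : ∀ n, 0 ≤ c n) {ε : ℝ}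
    (hε : 0 < ε) : ∃ δ : ℕ → ℝ, (∀ n, 0 < δ n) ∧
      ∀ n, δ n ≤ 1 ∧ c n * δ n ≤ 1 ∧ L n * (c n * δ n) ≤ ε / 2 ^ (n + 2) := by
  set η : ℕ → ℝ := fun n => min 1 (ε / 2 ^ (n + 2))
  refine ⟨fun n => η n / ((1 + L n) * (1 + c n)), fun n => ?_, fun n => ?_⟩
  · have := hL n; have := hc n; positivity
  set δ := η n / ((1 + L n) * (1 + c n))
  have hLn := hL n
  have hcn := hc n
  have hδ : 0 < δ := by positivity
  have hηδ : η n = (1 + L n) * (1 + c n) * δ := by simp only [δ]; field_simp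
  have hcδ := mul_nonneg hcn hδ.le
  refine ⟨?_, ?_, ?_⟩ <;>
    nlinarith [min_le_left 1 (ε / 2 ^ (n + 2)), min_le_right 1 (ε / 2 ^ (n + 2)),
      mul_nonneg hLn hcδ]

section DirectLimit

variable {R : Type*} [Semiring R] {E : Type*} [AddCommMonoid E] [Module R E]
  {X : ℕ → Type*} [∀ n, AddCommMonoid (X n)] [∀ n, Module R (X n)] [∀ n, TopologicalSpace (X n)]

lemma exists_continuousLinearMap_comp_eq (u : ∀ n, X n →ₗ[R] E) (j : ∀ n, X n →L[R] X (n + 1))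
    (hcomp : ∀ n x, u (n + 1) (j n x) = u n x) :
    ∃ J : ∀ m n, X m →L[R] X n, ∀ m n, m ≤ n → ∀ x, u n (J m n x) = u m x := by
  have step : ∀ m n, m ≤ n → ∃ J : X m →L[R] X n, ∀ x, u n (J x) = u m x := by
    intro m n hmn
    induction n, hmn using Nat.le_induction with
    | base => exact ⟨ContinuousLinearMap.id R _, fun _ => rfl⟩
    | succ n _ ih =>
      obtain ⟨J, hJ⟩ := ih
      exact ⟨(j n).comp J, fun x => (hcomp n (J x)).trans (hJ x)⟩
  classical
  choose J hJ using step
  exact ⟨fun m n => if h : m ≤ n then J m n h else 0, fun m n h x => by simpa [h] using hJ m n h x⟩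

end DirectLimit

section LBSpace

variable {𝕜 E F : Type*} [RCLike 𝕜] [AddCommGroup E] [Module 𝕜 E] [AddCommGroup F] [Module ℝ F]
  {X : ℕ → Type*} [∀ n, NormedAddCommGroup (X n)] [∀ n, NormedSpace 𝕜 (X n)]
  (u : ∀ n, X n →ₗ[𝕜] E) (J : ∀ m n, X m →L[𝕜] X n)

lemma exists_eq_partialSum (hJ : ∀ m n, m ≤ n → ∀ x, u n (J m n x) = u m x) {N : ℕ} (a : X N)
    (w : ∀ i, X i) (hw : ∀ i, ‖w i‖ ≤ 1) {n M : ℕ} (hn : n ≤ M) (hN : N ≤ M) :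
    ∃ v : X M, u M v = u N a + ∑ i ∈ Finset.range n, u i (w i) ∧
      ‖v‖ ≤ ‖J N M a‖ + ∑ i ∈ Finset.range n, ‖J i M‖ := by
  refine ⟨J N M a + ∑ i ∈ Finset.range n, J i M (w i), ?_, ?_⟩
  · rw [map_add, map_sum, hJ N M hN]
    congr 1
    exact Finset.sum_congr rfl fun i hi => hJ i M ((Finset.mem_range.mp hi).le.trans hn) _
  · refine (norm_add_le _ _).trans (add_le_add le_rfl ((norm_sum_le _ _).trans ?_))
    exact Finset.sum_le_sum fun i _ =>
      (J i M).le_opNorm_of_le (hw i) |>.trans_eq (mul_one _)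

lemma exists_delta_seminorm_sub_lt (hJ : ∀ m n, m ≤ n → ∀ x, u n (J m n x) = u m x)
    (p : Seminorm ℝ F) (f : E → F)
    (hf : ∀ n R, ∃ L, 0 ≤ L ∧ ∀ v h : X n, ‖v‖ ≤ R → ‖h‖ ≤ 1 →
      p (f (u n (v + h)) - f (u n v)) ≤ L * ‖h‖)
    {N : ℕ} (a : X N) {ε : ℝ} (hε : 0 < ε) :
    ∃ δ : ℕ → ℝ, (∀ i, 0 < δ i) ∧ ∀ (m : ℕ) (w : (i : Fin m) → X i), (∀ i, ‖w i‖ < δ i) →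
      p (f (u N a + ∑ i, u i.val (w i)) - f (u N a)) < ε := by
  choose L hL0 hL using hf
  set c : ℕ → ℝ := fun n => ‖J n (n + N)‖
  set R : ℕ → ℝ := fun n => ‖J N (n + N) a‖ + ∑ i ∈ Finset.range n, ‖J i (n + N)‖
  obtain ⟨δ, hδ, hδsmall⟩ := exists_pos_seq_small (fun n => L (n + N) (R n)) c
    (fun n => hL0 _ _) (fun n => norm_nonneg _) hε
  refine ⟨δ, hδ, fun m w hw => ?_⟩
  set w' : ∀ i, X i := fun i => if h : i < m then w ⟨i, h⟩ else 0
  have hw' : ∀ i, ‖w' i‖ ≤ δ i := fun i => by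
    by_cases h : i < m
    · simpa [w', h] using (hw ⟨i, h⟩).le
    · simpa [w', h] using (hδ i).le
  have hw'1 : ∀ i, ‖w' i‖ ≤ 1 := fun i => (hw' i).trans (hδsmall i).1
  set S : ℕ → E := fun n => u N a + ∑ i ∈ Finset.range n, u i (w' i)
  have hSm : u N a + ∑ i, u i.val (w i) = S m := by
    simp only [S, ← Fin.sum_univ_eq_sum_range (fun i => u i (w' i)), w', Fin.is_lt, dif_pos]
  have step : ∀ n, p (f (S (n + 1)) - f (S n)) ≤ ε / 2 ^ (n + 2) := by
    intro n
    obtain ⟨v, hv, hvR⟩ := exists_eq_partialSum u J hJ a w' hw'1 (Nat.le_add_right n N)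
      (Nat.le_add_left N n)
    have hvh : u (n + N) (v + J n (n + N) (w' n)) = S (n + 1) := by
      rw [map_add, hv, hJ n _ (Nat.le_add_right n N), add_assoc, ← Finset.sum_range_succ]
    have hh : ‖J n (n + N) (w' n)‖ ≤ c n * δ n :=
      (J n (n + N)).le_opNorm_of_le (hw' n)
    rw [← hvh, show S n = u (n + N) v from hv.symm]
    calc p (f (u (n + N) (v + J n (n + N) (w' n))) - f (u (n + N) v))
        ≤ L (n + N) (R n) * ‖J n (n + N) (w' n)‖ :=
          hL _ _ v _ hvR (hh.trans (hδsmall n).2.1)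
      _ ≤ L (n + N) (R n) * (c n * δ n) := by gcongr; exact hL0 _ _
      _ ≤ ε / 2 ^ (n + 2) := (hδsmall n).2.2
  have := p.sub_lt_of_sub_succ_le (fun n => f (S n)) hε step m
  simpa [hSm, S] using this

end LBSpace

theorem stmt17_general {𝕜 : Type*} [RCLike 𝕜] {E : Type*} [AddCommGroup E] [Module 𝕜 E]
    [TopologicalSpace E] [IsTopologicalAddGroup E]
    {F : Type*} [AddCommGroup F] [Module ℝ F] [Module 𝕜 F] [IsScalarTower ℝ 𝕜 F]
    [TopologicalSpace F] [IsTopologicalAddGroup F] [ContinuousSMul 𝕜 F]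
    [LocallyConvexSpace ℝ F]
    (X : ℕ → Type*) [∀ n, NormedAddCommGroup (X n)] [∀ n, NormedSpace 𝕜 (X n)]
    (u : ∀ n, X n →ₗ[𝕜] E)
    (hucont : ∀ n, Continuous fun y : X n => u n y)
    (j : ∀ n, X n →ₗ[𝕜] X (n + 1)) (hjcont : ∀ n, Continuous fun x : X n => j n x)
    (hcomp : ∀ n (x : X n), u (n + 1) (j n x) = u n x)
    (hunion : ∀ x : E, ∃ n, x ∈ Set.range (u n))
    (hnhds : ∀ δ : ℕ → ℝ, (∀ i, 0 < δ i) →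
      {x : E | ∃ (m : ℕ) (w : (i : Fin m) → X i.val),
          (∀ i, ‖w i‖ < δ i.val) ∧ x = ∑ i, u i.val (w i)} ∈ nhds (0 : E))
    (f : E → F) (d : ℕ)
    (β : (k : Fin (d + 1)) → MultilinearMap 𝕜 (fun _ : Fin (k : ℕ) => E) F)
    (hfpoly : ∀ x : E, f x = ∑ k, β k fun _ => x) :
    Continuous f ↔ ∀ n, Continuous fun y : X n => f (u n y) := by
  refine ⟨fun hf n => hf.comp (hucont n), fun hres => ?_⟩
  obtain ⟨J, hJ⟩ := exists_continuousLinearMap_comp_eq u (fun n => ⟨j n, hjcont n⟩) hcomp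
  have hf : IsPolynomialOnLines 𝕜 d f := funext hfpoly ▸ isPolynomialOnLines_sum_multilinearMap β
  have : ContinuousSMul ℝ F := IsScalarTower.continuousSMul 𝕜
  have hF := with_gaugeSeminormFamily (𝕜 := ℝ) (E := F)
  refine continuous_iff_continuousAt.mpr fun x₀ => (hF.tendsto_nhds f (f x₀)).mpr fun s ε hε => ?_
  obtain ⟨N, a, rfl⟩ := hunion x₀
  obtain ⟨δ, hδ, hδf⟩ := exists_delta_seminorm_sub_lt u J hJ _ f
    (fun n => (hf.comp_linearMap (u n)).exists_seminorm_sub_le_mul_norm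
      (hF.continuous_seminorm s) (hres n)) a hε
  filter_upwards [((continuous_sub_right (u N a)).tendsto' _ 0 (sub_self _)).eventually
    (hnhds δ hδ)] with x ⟨m, w, hw, hx⟩
  simpa [← hx] using hδf m w hw

/-- Corollary 2.1: continuity of polynomials on LB-spaces.  Let `𝕜 ∈ {ℝ, ℂ}` and let `E`
be the Hausdorff locally convex direct limit of an increasing sequence of normed spaces
`X n` over `𝕜` (realized by injective continuous linear maps `u n : X n → E` compatible
with continuous bonding maps `j n`; the direct limit topology is encoded by requiring
every basic set `V(δ₁, δ₂, …)` to be a `0`-neighborhood).  A polynomial map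
`f : E → F` (a finite sum of homogeneous multilinear evaluations) with values in a
locally convex space `F` is continuous if and only if each restriction `f ∘ u n` is
continuous. -/
theorem stmt17 {𝕜 : Type*} [RCLike 𝕜] {E : Type*} [AddCommGroup E] [Module 𝕜 E]
    [TopologicalSpace E] [IsTopologicalAddGroup E] [ContinuousSMul 𝕜 E] [T2Space E]
    {F : Type*} [AddCommGroup F] [Module ℝ F] [Module 𝕜 F] [IsScalarTower ℝ 𝕜 F]
    [TopologicalSpace F] [IsTopologicalAddGroup F] [ContinuousSMul 𝕜 F]
    [LocallyConvexSpace ℝ F]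
    (X : ℕ → Type*) [∀ n, NormedAddCommGroup (X n)] [∀ n, NormedSpace 𝕜 (X n)]
    (u : ∀ n, X n →ₗ[𝕜] E) (huinj : ∀ n, Function.Injective (u n))
    (hucont : ∀ n, Continuous fun y : X n => u n y)
    (j : ∀ n, X n →ₗ[𝕜] X (n + 1)) (hjcont : ∀ n, Continuous fun x : X n => j n x)
    (hcomp : ∀ n (x : X n), u (n + 1) (j n x) = u n x)
    (hunion : ∀ x : E, ∃ n, x ∈ Set.range (u n))
    (hnhds : ∀ δ : ℕ → ℝ, (∀ i, 0 < δ i) →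
      {x : E | ∃ (m : ℕ) (w : (i : Fin m) → X i.val),
          (∀ i, ‖w i‖ < δ i.val) ∧ x = ∑ i, u i.val (w i)} ∈ nhds (0 : E))
    (f : E → F) (d : ℕ)
    (β : (k : Fin (d + 1)) → MultilinearMap 𝕜 (fun _ : Fin (k : ℕ) => E) F)
    (hfpoly : ∀ x : E, f x = ∑ k, β k fun _ => x) :
    Continuous f ↔ ∀ n, Continuous fun y : X n => f (u n y) :=
  stmt17_general X u hucont j hjcont hcomp hunion hnhds f d β hfpoly
end
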